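/- arXiv:0805.1305 — 4 statements merged into one kernel-verified Lean document; each statement's English description precedes it below -/
import Mathlib

section
/- Let f̃ ∈ 𝕂[x₁,…,xₙ] be a polynomial with tropicalization f, and let (b̃₁,…,b̃ₙ) ∈ (𝕂*)ⁿ be any point. Then there is a root (c̃₁,…,c̃ₙ) of f̃ with Pt(c̃ᵢ) = Pt(b̃ᵢ) for all 1 ≤ i ≤ n if and only if b = (T(b̃₁),…,T(b̃ₙ)) is a zero of the tropical polynomial f and (Pc(b̃₁),…,Pc(b̃ₙ)) is a root of the residual polynomial f̃_b in (k*)ⁿ. -/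
noncomputable section
open scoped Classical

/-- An algebraically closed field `K` together with a nontrivial rank-one valuation
`v : K → Γ ∪ {∞}` (written additively, with `v 0 = ⊤` and value group containing `ℚ`),
a residue field `k`, and the principal-coefficient map `Pc : K → k`,
`Pc(x₀ t^γ) = x̄₀` (`Pc 0 = 0`).  The tropicalization map is `T(x) = −v(x)`.
The axioms for `Pc` encode that `Pt(x) = Pt(y)` iff `v x = v y < v (x − y)`. -/
structure ValData (K : Type) [Field K] (k : Type) [Field k] : Type where
  /-- the valuation -/
  v : K → WithTop ℝ
  /-- the principal coefficient (residue of `x t^{v x}`) -/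
  Pc : K → k
  v_eq_top : ∀ x : K, v x = ⊤ ↔ x = 0
  v_mul : ∀ x y : K, v (x * y) = v x + v y
  v_add : ∀ x y : K, min (v x) (v y) ≤ v (x + y)
  /-- the value group contains `ℚ` (in particular the valuation is nontrivial) -/
  v_rat : ∀ q : ℚ, ∃ x : K, v x = ((q : ℝ) : WithTop ℝ)
  Pc_zero : Pc 0 = 0
  Pc_ne_zero : ∀ x : K, x ≠ 0 → Pc x ≠ 0
  Pc_one : Pc 1 = 1
  Pc_mul : ∀ x y : K, Pc (x * y) = Pc x * Pc y
  Pc_add_of_v_eq : ∀ x y : K, v x = v y → v (x + y) = v x → Pc (x + y) = Pc x + Pc y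
  Pc_add_cancel : ∀ x y : K, v x = v y → v x < v (x + y) → Pc x + Pc y = 0
  Pc_add_of_v_lt : ∀ x y : K, v x < v y → Pc (x + y) = Pc x

/-!
Work at the level `-W`, where `W` is the maximum of the tropical monomials at `b`: at any point
with the valuations of `b̃`, every term of `f̃` has valuation `≥ -W`, and the residue of `f̃` at
level `-W` is the residual polynomial `f̃_b` evaluated at the principal coefficients. Hence a
lifted root forces `f̃_b (Pc b̃) = 0`, and a single maximizing monomial could not cancel.

Conversely, the principal coefficients of units form an infinite set (`K` is algebraically
closed), so some `x` with the valuations of `b̃` has `f̃_b (Pc x) ≠ 0`. Along the segment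
`t ↦ b̃ + t (x - b̃)`, `f̃` is a polynomial `Q` with `v (Q 1) = -W < v (Q 0)`; splitting `Q`
into linear factors yields a root `t` with `v t > 0`, which gives a root with the principal
terms of `b̃`.
-/

open Polynomial

lemma exists_pow_eq_one_of_finite {M : Type*} [MonoidWithZero M] [IsCancelMulZero M] {S : Set M}
    (hS : S.Finite) (hpow : ∀ z ∈ S, ∀ m : ℕ, z ^ m ∈ S) (h0 : (0 : M) ∉ S) :
    ∃ N, 0 < N ∧ ∀ z ∈ S, z ^ N = 1 := by
  have hfin : ∀ z ∈ S, IsOfFinOrder z := by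
    intro z hz
    obtain ⟨m, n, hmn, he⟩ :=
      hS.exists_lt_map_eq_of_forall_mem (f := fun m : ℕ => z ^ m) (hpow z hz)
    refine isOfFinOrder_iff_pow_eq_one.2 ⟨n - m, by omega, ?_⟩
    apply mul_left_cancel₀ (pow_ne_zero m (ne_of_mem_of_not_mem hz h0))
    rw [← pow_add, Nat.add_sub_cancel' hmn.le, mul_one]
    exact he.symm
  refine ⟨∏ z ∈ hS.toFinset, orderOf z, Finset.prod_pos fun z hz => ?_, fun z hz => ?_⟩
  · exact (hfin z (hS.mem_toFinset.1 hz)).orderOf_pos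
  · exact orderOf_dvd_iff_pow_eq_one.1 (Finset.dvd_prod_of_mem _ (hS.mem_toFinset.2 hz))

lemma IsAlgClosed.exists_pow_eq_sub_one {K : Type*} [Field K] [IsAlgClosed K] {q : ℕ}
    (hq : 2 ≤ q) : ∃ w : K, w ^ q = w - 1 := by
  have hlt : (X - C 1 : K[X]).degree < (X ^ q : K[X]).degree := by
    rw [degree_X_sub_C, degree_X_pow]; exact_mod_cast hq
  obtain ⟨w, hw⟩ := IsAlgClosed.exists_root (X ^ q - (X - C 1) : K[X]) (by
    rw [degree_sub_eq_left_of_degree_lt hlt, degree_X_pow]; exact_mod_cast (by omega : q ≠ 0))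
  refine ⟨w, ?_⟩
  simp only [IsRoot, eval_sub, eval_pow, eval_X, eval_C] at hw
  linear_combination hw

namespace ValData

variable {K k : Type} [Field K] [Field k] (V : ValData K k)

lemma v_zero : V.v 0 = ⊤ := (V.v_eq_top 0).2 rfl

lemma v_ne_top {x : K} (hx : x ≠ 0) : V.v x ≠ ⊤ := fun h => hx ((V.v_eq_top x).1 h)

lemma ne_zero_of_v_ne_top {x : K} (hx : V.v x ≠ ⊤) : x ≠ 0 := fun h => hx ((V.v_eq_top x).2 h)

lemma ne_zero_of_v_eq_coe {x : K} {γ : ℝ} (h : V.v x = γ) : x ≠ 0 :=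
  V.ne_zero_of_v_ne_top (h ▸ WithTop.coe_ne_top)

lemma exists_v_eq_coe {x : K} (hx : x ≠ 0) : ∃ γ : ℝ, V.v x = γ :=
  WithTop.ne_top_iff_exists.1 (V.v_ne_top hx) |>.imp fun _ h => h.symm

lemma v_one : V.v 1 = 0 := by
  obtain ⟨γ, hγ⟩ := V.exists_v_eq_coe one_ne_zero
  have h := V.v_mul 1 1
  rw [one_mul, hγ, ← WithTop.coe_add, WithTop.coe_inj] at h
  rw [hγ, show γ = 0 by linarith, WithTop.coe_zero]

lemma v_neg_one : V.v (-1) = 0 := by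
  obtain ⟨γ, hγ⟩ := V.exists_v_eq_coe (neg_ne_zero.2 one_ne_zero)
  have h := V.v_mul (-1) (-1)
  rw [neg_mul_neg, one_mul, V.v_one, hγ, ← WithTop.coe_add, ← WithTop.coe_zero,
    WithTop.coe_inj] at h
  rw [hγ, show γ = 0 by linarith, WithTop.coe_zero]

lemma v_neg (x : K) : V.v (-x) = V.v x := by
  rw [← neg_one_mul, V.v_mul, V.v_neg_one, zero_add]

lemma min_le_v_sub (x y : K) : min (V.v x) (V.v y) ≤ V.v (x - y) := by
  simpa only [sub_eq_add_neg, V.v_neg] using V.v_add x (-y)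

lemma v_add_eq_of_lt {x y : K} (h : V.v x < V.v y) : V.v (x + y) = V.v x := by
  refine le_antisymm ?_ (min_eq_left h.le ▸ V.v_add x y)
  by_contra! hlt
  have := V.min_le_v_sub (x + y) y
  rw [add_sub_cancel_right] at this
  exact this.not_gt (lt_min hlt h)

lemma v_pow (x : K) (m : ℕ) : V.v (x ^ m) = m • V.v x := by
  induction m with
  | zero => simp [V.v_one]
  | succ m ih => rw [pow_succ, V.v_mul, ih, succ_nsmul]

lemma v_multiset_prod (s : Multiset K) : V.v s.prod = (s.map V.v).sum := by
  induction s using Multiset.induction_on with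
  | empty => simp [V.v_one]
  | cons x s ih => simp [V.v_mul, ih]

lemma v_prod {ι : Type*} (s : Finset ι) (f : ι → K) :
    V.v (∏ i ∈ s, f i) = ∑ i ∈ s, V.v (f i) := by
  rw [Finset.prod_eq_multiset_prod, V.v_multiset_prod, Multiset.map_map]; rfl

def PcHom : K →*₀ k where
  toFun := V.Pc
  map_zero' := V.Pc_zero
  map_one' := V.Pc_one
  map_mul' := V.Pc_mul

lemma Pc_pow (x : K) (m : ℕ) : V.Pc (x ^ m) = V.Pc x ^ m := map_pow V.PcHom x m

lemma Pc_prod {ι : Type*} (s : Finset ι) (f : ι → K) :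
    V.Pc (∏ i ∈ s, f i) = ∏ i ∈ s, V.Pc (f i) :=
  map_prod V.PcHom f s

lemma Pc_neg_one : V.Pc (-1) = -1 := by
  have h := V.Pc_add_cancel 1 (-1) (by rw [V.v_one, V.v_neg_one])
    (by rw [add_neg_cancel, V.v_zero, V.v_one]; exact WithTop.coe_lt_top 0)
  rw [V.Pc_one] at h
  exact eq_neg_of_add_eq_zero_right h

def SamePrincipalTerm (x y : K) : Prop :=
  x ≠ 0 ∧ V.v x = V.v y ∧ V.v y < V.v (x - y)

lemma Pc_eq_of_samePrincipalTerm {x y : K} (h : V.SamePrincipalTerm x y) : V.Pc x = V.Pc y := by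
  simpa using V.Pc_add_of_v_lt y (x - y) h.2.2

lemma samePrincipalTerm_add {x e : K} (hx : x ≠ 0) (h : V.v x < V.v e) :
    V.SamePrincipalTerm (x + e) x := by
  have hv : V.v (x + e) = V.v x := V.v_add_eq_of_lt h
  exact ⟨V.ne_zero_of_v_ne_top (hv ▸ V.v_ne_top hx), hv, by rwa [add_sub_cancel_left]⟩

lemma v_lt_v_mul {x d y : K} (hx : x ≠ 0) (hd : V.v x ≤ V.v d) (hy : 0 < V.v y) :
    V.v x < V.v (y * d) :=
  calc V.v x = 0 + V.v x := (zero_add _).symm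
    _ < V.v y + V.v x := WithTop.add_lt_add_right (V.v_ne_top hx) hy
    _ ≤ V.v (y * d) := V.v_mul y d ▸ add_le_add_right hd _

def res (μ : ℝ) (x : K) : k := if V.v x = μ then V.Pc x else 0

lemma res_eq_zero_iff {μ : ℝ} {x : K} (hx : μ ≤ V.v x) :
    V.res μ x = 0 ↔ (μ : WithTop ℝ) < V.v x := by
  unfold res
  split_ifs with h
  · simp only [h, lt_self_iff_false, iff_false]
    exact V.Pc_ne_zero x (V.ne_zero_of_v_ne_top (h ▸ WithTop.coe_ne_top))
  · exact iff_of_true rfl (lt_of_le_of_ne hx (Ne.symm h))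

lemma res_add_of_v_eq_of_lt {μ : ℝ} {x y : K} (hx : V.v x = μ) (hy : (μ : WithTop ℝ) < V.v y) :
    V.res μ (x + y) = V.res μ x + V.res μ y := by
  have hxy : V.v x < V.v y := hx ▸ hy
  simp [res, V.v_add_eq_of_lt hxy, hx, hy.ne', V.Pc_add_of_v_lt x y hxy]

lemma res_add {μ : ℝ} {x y : K} (hx : μ ≤ V.v x) (hy : μ ≤ V.v y) :
    V.res μ (x + y) = V.res μ x + V.res μ y := by
  have hxy : (μ : WithTop ℝ) ≤ V.v (x + y) := le_trans (le_min hx hy) (V.v_add x y)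
  rcases hx.eq_or_lt with hx | hx <;> rcases hy.eq_or_lt with hy | hy
  · rcases hxy.eq_or_lt with hs | hs
    · simp [res, ← hx, ← hy, ← hs, V.Pc_add_of_v_eq x y (hx.symm.trans hy) (hs.symm.trans hx)]
    · simp [res, ← hx, ← hy, hs.ne', V.Pc_add_cancel x y (hx.symm.trans hy) (hx ▸ hs)]
  · exact V.res_add_of_v_eq_of_lt hx.symm hy
  · rw [add_comm, V.res_add_of_v_eq_of_lt hy.symm hx, add_comm]
  · simp [res, hx.ne', hy.ne', (lt_of_lt_of_le (lt_min hx hy) (V.v_add x y)).ne']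

lemma le_v_sum {ι : Type*} {μ : WithTop ℝ} (s : Finset ι) (f : ι → K)
    (h : ∀ i ∈ s, μ ≤ V.v (f i)) : μ ≤ V.v (∑ i ∈ s, f i) := by
  induction s using Finset.cons_induction with
  | empty => simp [V.v_zero]
  | cons i s hi ih =>
    rw [Finset.sum_cons]
    exact le_trans (le_min (h i (s.mem_cons_self i)) (ih fun l hl => h l (s.mem_cons_of_mem hl)))
      (V.v_add _ _)

lemma res_sum {ι : Type*} {μ : ℝ} (s : Finset ι) (f : ι → K) (h : ∀ i ∈ s, μ ≤ V.v (f i)) :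
    V.res μ (∑ i ∈ s, f i) = ∑ i ∈ s, V.res μ (f i) := by
  induction s using Finset.cons_induction with
  | empty => simp [res, V.v_zero]
  | cons i s hi ih =>
    have hs : ∀ l ∈ s, μ ≤ V.v (f l) := fun l hl => h l (s.mem_cons_of_mem hl)
    rw [Finset.sum_cons, Finset.sum_cons, V.res_add (h i (s.mem_cons_self i)) (V.le_v_sum s f hs),
      ih hs]

/-- Otherwise every root `r` has `v r ≤ 0 ≤ v z`, so `v (z - r) ≥ v (0 - r)` factor by factor. -/
lemma exists_root_v_pos [IsAlgClosed K] {Q : K[X]} {z : K} (hz : 0 ≤ V.v z)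
    (h : V.v (Q.eval z) < V.v (Q.eval 0)) : ∃ y, Q.IsRoot y ∧ 0 < V.v y := by
  by_contra! hroots
  have hsplit := IsAlgClosed.splits Q
  refine h.not_ge ?_
  rw [hsplit.eval_eq_prod_roots, hsplit.eval_eq_prod_roots, V.v_mul, V.v_mul,
    V.v_multiset_prod, V.v_multiset_prod, Multiset.map_map, Multiset.map_map]
  refine add_le_add_right (Multiset.sum_map_le_sum_map _ _ fun r hr => ?_) _
  have hr : V.v r ≤ 0 := hroots r (isRoot_of_mem_roots hr)
  simpa [V.v_neg, min_eq_right (hr.trans hz)] using V.min_le_v_sub z r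

lemma v_eq_zero_of_pow_eq_sub_one {w : K} {q : ℕ} (hq : 2 ≤ q) (hw : w ^ q = w - 1) :
    V.v w = 0 := by
  have hw0 : w ≠ 0 := by
    rintro rfl
    simp [zero_pow (by omega : q ≠ 0)] at hw
  obtain ⟨γ, hγ⟩ := V.exists_v_eq_coe hw0
  have hq' : (2 : ℝ) ≤ q := by exact_mod_cast hq
  have hpow : V.v (w - 1) = ((q * γ : ℝ) : WithTop ℝ) := by
    rw [← hw, V.v_pow, hγ, ← WithTop.coe_nsmul, nsmul_eq_mul]
  rcases lt_trichotomy γ 0 with hneg | hzero | hpos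
  · have : V.v (w + -1) = V.v w :=
      V.v_add_eq_of_lt (by rw [hγ, V.v_neg, V.v_one]; exact_mod_cast hneg)
    rw [← sub_eq_add_neg, hpow, hγ, WithTop.coe_inj] at this
    nlinarith
  · rw [hγ, hzero, WithTop.coe_zero]
  · have : V.v (-1 + w) = V.v (-1) :=
      V.v_add_eq_of_lt (by rw [hγ, V.v_neg_one]; exact_mod_cast hpos)
    rw [neg_add_eq_sub, hpow, V.v_neg_one, ← WithTop.coe_zero, WithTop.coe_inj] at this
    nlinarith

def unitResidues : Set k := V.Pc '' {u | V.v u = 0}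

lemma pow_mem_unitResidues {z : k} (hz : z ∈ V.unitResidues) (m : ℕ) :
    z ^ m ∈ V.unitResidues := by
  obtain ⟨u, hu, rfl⟩ := hz
  exact ⟨u ^ m, by simp_all [V.v_pow], V.Pc_pow u m⟩


lemma unitResidues_infinite [IsAlgClosed K] : V.unitResidues.Infinite := by
  intro hfin
  have h0 : (0 : k) ∉ V.unitResidues := fun ⟨u, hu, hPc⟩ => by
    by_cases hu0 : u = 0
    · simp [hu0, V.v_zero] at hu
    · exact V.Pc_ne_zero u hu0 hPc
  obtain ⟨N, hN, hpowN⟩ :=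
    exists_pow_eq_one_of_finite hfin (fun z hz m => V.pow_mem_unitResidues hz m) h0
  obtain ⟨w, hw⟩ := IsAlgClosed.exists_pow_eq_sub_one (K := K) (q := N + 1) (by omega)
  have hv : V.v w = 0 := V.v_eq_zero_of_pow_eq_sub_one (by omega) hw
  -- `z = Pc w` lies in the finite set, so `z ^ (N + 1) = z`, while `w ^ (N + 1) = w - 1`.
  have hPc : V.Pc (w - 1) = V.Pc w - 1 := by
    rw [sub_eq_add_neg, V.Pc_add_of_v_eq w (-1) (by rw [hv, V.v_neg_one])
      (by rw [← sub_eq_add_neg, ← hw, V.v_pow, hv, nsmul_zero]), V.Pc_neg_one, ← sub_eq_add_neg]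
  rw [← hw, V.Pc_pow, pow_succ', hpowN _ ⟨w, hv, rfl⟩, mul_one] at hPc
  exact one_ne_zero (by linear_combination hPc : (1 : k) = 0)

lemma infinite_Pc_image_v_eq [IsAlgClosed K] {y : K} (hy : y ≠ 0) :
    (V.Pc '' {x | V.v x = V.v y}).Infinite := by
  refine (V.unitResidues_infinite.image (mul_right_injective₀ (V.Pc_ne_zero y hy)).injOn).mono ?_
  rintro _ ⟨_, ⟨u, hu, rfl⟩, rfl⟩
  exact ⟨y * u, by simp_all [V.v_mul], V.Pc_mul y u⟩

end ValData

lemma MvPolynomial.exists_eval_ne_zero_of_infinite {σ R : Type*} [Finite σ] [CommRing R]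
    [IsDomain R] {P : MvPolynomial σ R} (hP : P ≠ 0) {S : σ → Set R} (hS : ∀ j, (S j).Infinite) :
    ∃ z : σ → R, (∀ j, z j ∈ S j) ∧ MvPolynomial.eval z P ≠ 0 := by
  choose T hTS hT using fun j => (hS j).exists_subset_card_eq (P.degreeOf j + 1)
  by_contra! h
  exact hP (MvPolynomial.eq_zero_of_eval_zero_at_prod_finset P T (by simp [hT])
    fun z hz => h z fun j => hTS j (hz j))

lemma exists_sum_mul_prod_pow_ne_zero {σ R : Type*} [Fintype σ] [CommRing R] [IsDomain R]
    {J : Finset (σ → ℕ)} {A : (σ → ℕ) → R} {i₀ : σ → ℕ} (hi₀ : i₀ ∈ J) (hA : A i₀ ≠ 0)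
    {S : σ → Set R} (hS : ∀ j, (S j).Infinite) :
    ∃ z : σ → R, (∀ j, z j ∈ S j) ∧ ∑ i ∈ J, A i * ∏ j, z j ^ i j ≠ 0 := by
  let e := (Finsupp.equivFunOnFinite (α := σ) (M := ℕ)).symm
  let P : MvPolynomial σ R := ∑ i ∈ J, MvPolynomial.monomial (e i) (A i)
  have hP : P.coeff (e i₀) = A i₀ := by
    rw [MvPolynomial.coeff_sum, Finset.sum_eq_single_of_mem i₀ hi₀ fun i _ hi => ?_]
    · simp
    · simp [MvPolynomial.coeff_monomial, e.injective.ne hi]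
  obtain ⟨z, hzS, hz⟩ := MvPolynomial.exists_eval_ne_zero_of_infinite (P := P)
    (fun h => hA (by rw [← hP, h, MvPolynomial.coeff_zero])) hS
  refine ⟨z, hzS, ?_⟩
  simpa [P, e, MvPolynomial.eval_monomial, Finsupp.prod_fintype] using hz

lemma exists_ne_of_sum_eq_zero {ι M : Type*} [AddCommMonoid M] {s : Finset ι} {f : ι → M}
    (hs : s.Nonempty) (hf : ∀ i ∈ s, f i ≠ 0) (h : ∑ i ∈ s, f i = 0) :
    ∃ i ∈ s, ∃ i' ∈ s, i ≠ i' := by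
  obtain ⟨i, hi⟩ := hs
  by_contra! hsingle
  refine hf i hi ?_
  rwa [Finset.sum_eq_single_of_mem i hi fun l hl hli => absurd (hsingle l hl i hi) hli] at h

section Tropical

variable {σ : Type*} [Fintype σ]

def tropMonomial (a : (σ → ℕ) → ℝ) (b : σ → ℝ) (i : σ → ℕ) : ℝ := a i + ∑ j, (i j : ℝ) * b j

def maximizers (I : Finset (σ → ℕ)) (a : (σ → ℕ) → ℝ) (b : σ → ℝ) : Finset (σ → ℕ) :=
  I.filter fun i => ∀ l ∈ I, tropMonomial a b l ≤ tropMonomial a b i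

def IsTropicalRoot (I : Finset (σ → ℕ)) (a : (σ → ℕ) → ℝ) (b : σ → ℝ) : Prop :=
  ∃ i ∈ I, ∃ i' ∈ I, i ≠ i' ∧ tropMonomial a b i = tropMonomial a b i' ∧
    ∀ l ∈ I, tropMonomial a b l ≤ tropMonomial a b i

lemma maximizers_nonempty {I : Finset (σ → ℕ)} (hI : I.Nonempty) (a : (σ → ℕ) → ℝ)
    (b : σ → ℝ) : (maximizers I a b).Nonempty := by
  obtain ⟨i, hi, hmax⟩ := Finset.exists_mem_eq_sup' hI (tropMonomial a b)
  exact ⟨i, Finset.mem_filter.2 ⟨hi, fun l hl => hmax ▸ Finset.le_sup' _ hl⟩⟩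

lemma isTropicalRoot_of_residual_eval_eq_zero {R : Type*} [CommRing R] [IsDomain R]
    {I : Finset (σ → ℕ)} (hI : I.Nonempty) {a : (σ → ℕ) → ℝ} {b : σ → ℝ} {A : (σ → ℕ) → R}
    (hA : ∀ i ∈ I, A i ≠ 0) {z : σ → R} (hz : ∀ j, z j ≠ 0)
    (h : ∑ i ∈ maximizers I a b, A i * ∏ j, z j ^ i j = 0) : IsTropicalRoot I a b := by
  have hterm : ∀ i ∈ maximizers I a b, A i * ∏ j, z j ^ i j ≠ 0 := fun i hi =>
    mul_ne_zero (hA i (Finset.mem_filter.1 hi).1)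
      (Finset.prod_ne_zero_iff.2 fun j _ => pow_ne_zero _ (hz j))
  obtain ⟨i, hi, i', hi', hne⟩ := exists_ne_of_sum_eq_zero (maximizers_nonempty hI a b) hterm h
  obtain ⟨hiI, hi_max⟩ := Finset.mem_filter.1 hi
  obtain ⟨hi'I, hi'_max⟩ := Finset.mem_filter.1 hi'
  exact ⟨i, hiI, i', hi'I, hne, le_antisymm (hi'_max i hiI) (hi_max i' hi'I), hi_max⟩

namespace ValData

variable {K k : Type} [Field K] [Field k] (V : ValData K k)

lemma v_monomial {a : (σ → ℕ) → ℝ} {b : σ → ℝ} {c : K} {x : σ → K} {i : σ → ℕ}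
    (hc : V.v c = ((-(a i) : ℝ) : WithTop ℝ)) (hx : ∀ j, V.v (x j) = ((-(b j) : ℝ) : WithTop ℝ)) :
    V.v (c * ∏ j, x j ^ i j) = ((-tropMonomial a b i : ℝ) : WithTop ℝ) := by
  simp only [V.v_mul, V.v_prod, V.v_pow, hc, hx, tropMonomial]
  norm_cast
  simp only [smul_neg, nsmul_eq_mul, Finset.sum_neg_distrib]
  ring

/-- At a point of valuation `-b`, the residue of `∑ c_i x^i` at the level of the tropical maximum
is the residual polynomial evaluated at the principal coefficients. -/
lemma residual_eval_eq_zero_iff {I : Finset (σ → ℕ)} (hI : I.Nonempty) {c : (σ → ℕ) → K}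
    {a : (σ → ℕ) → ℝ} (ha : ∀ i ∈ I, V.v (c i) = ((-(a i) : ℝ) : WithTop ℝ)) {b : σ → ℝ}
    {x : σ → K} (hx : ∀ j, V.v (x j) = ((-(b j) : ℝ) : WithTop ℝ)) :
    ∑ i ∈ maximizers I a b, V.Pc (c i) * ∏ j, V.Pc (x j) ^ i j = 0 ↔
      ((-I.sup' hI (tropMonomial a b) : ℝ) : WithTop ℝ) < V.v (∑ i ∈ I, c i * ∏ j, x j ^ i j) := by
  set W := I.sup' hI (tropMonomial a b)
  have hterm : ∀ i ∈ I, ((-W : ℝ) : WithTop ℝ) ≤ V.v (c i * ∏ j, x j ^ i j) := fun i hi => by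
    rw [V.v_monomial (ha i hi) hx, WithTop.coe_le_coe, neg_le_neg_iff]
    exact Finset.le_sup' _ hi
  rw [← V.res_eq_zero_iff (V.le_v_sum I _ hterm), V.res_sum I _ hterm, maximizers,
    Finset.sum_filter]
  refine Eq.congr_left (Finset.sum_congr rfl fun i hi => ?_)
  have hmax : (∀ l ∈ I, tropMonomial a b l ≤ tropMonomial a b i) ↔ tropMonomial a b i = W := by
    rw [← Finset.sup'_le_iff hI]
    exact ⟨fun h => le_antisymm (Finset.le_sup' _ hi) h, ge_of_eq⟩
  simp only [res, V.v_monomial (ha i hi) hx, WithTop.coe_inj, neg_inj, hmax, V.Pc_mul, V.Pc_prod,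
    V.Pc_pow]

lemma residual_eval_eq_zero_of_root {I : Finset (σ → ℕ)} (hI : I.Nonempty) {c : (σ → ℕ) → K}
    {a : (σ → ℕ) → ℝ} (ha : ∀ i ∈ I, V.v (c i) = ((-(a i) : ℝ) : WithTop ℝ)) {b : σ → ℝ}
    {x y : σ → K} (hx : ∀ j, V.v (x j) = ((-(b j) : ℝ) : WithTop ℝ))
    (hy : ∀ j, V.SamePrincipalTerm (y j) (x j)) (hroot : ∑ i ∈ I, c i * ∏ j, y j ^ i j = 0) :
    ∑ i ∈ maximizers I a b, V.Pc (c i) * ∏ j, V.Pc (x j) ^ i j = 0 := by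
  simp only [← fun j => V.Pc_eq_of_samePrincipalTerm (hy j)]
  rw [V.residual_eval_eq_zero_iff hI ha fun j => (hy j).2.1.trans (hx j), hroot, V.v_zero]
  exact WithTop.coe_lt_top _

lemma exists_residual_eval_ne_zero [IsAlgClosed K] {I : Finset (σ → ℕ)} (hI : I.Nonempty)
    {c : (σ → ℕ) → K} (hc : ∀ i ∈ I, c i ≠ 0) (a : (σ → ℕ) → ℝ) (b : σ → ℝ) {x : σ → K}
    (hx : ∀ j, x j ≠ 0) :
    ∃ x' : σ → K, (∀ j, V.v (x' j) = V.v (x j)) ∧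
      ∑ i ∈ maximizers I a b, V.Pc (c i) * ∏ j, V.Pc (x' j) ^ i j ≠ 0 := by
  obtain ⟨i₀, hi₀⟩ := maximizers_nonempty hI a b
  obtain ⟨z, hzS, hz⟩ := exists_sum_mul_prod_pow_ne_zero (A := fun i => V.Pc (c i)) hi₀
    (V.Pc_ne_zero _ (hc i₀ (Finset.mem_filter.1 hi₀).1)) fun j => V.infinite_Pc_image_v_eq (hx j)
  choose x' hvx' hPcx' using hzS
  exact ⟨x', hvx', by simpa only [← hPcx'] using hz⟩

lemma exists_root_on_segment [IsAlgClosed K] {I : Finset (σ → ℕ)} {c : (σ → ℕ) → K}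
    {p q : σ → K}
    (h : V.v (∑ i ∈ I, c i * ∏ j, q j ^ i j) < V.v (∑ i ∈ I, c i * ∏ j, p j ^ i j)) :
    ∃ y, 0 < V.v y ∧ ∑ i ∈ I, c i * ∏ j, (p j + y * (q j - p j)) ^ i j = 0 := by
  set Q : K[X] := ∑ i ∈ I, C (c i) * ∏ j, (C (p j) + X * C (q j - p j)) ^ i j
  have hQ : ∀ t, Q.eval t = ∑ i ∈ I, c i * ∏ j, (p j + t * (q j - p j)) ^ i j := by
    simp [Q, eval_finsetSum, eval_prod]
  obtain ⟨y, hy, hyv⟩ := V.exists_root_v_pos (Q := Q) (z := 1) V.v_one.ge (by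
    simpa only [hQ, one_mul, zero_mul, add_zero, add_sub_cancel] using h)
  exact ⟨y, hyv, (hQ y).symm.trans hy⟩

lemma exists_root_samePrincipalTerm [IsAlgClosed K] {I : Finset (σ → ℕ)} (hI : I.Nonempty)
    {c : (σ → ℕ) → K} {a : (σ → ℕ) → ℝ} (ha : ∀ i ∈ I, V.v (c i) = ((-(a i) : ℝ) : WithTop ℝ))
    {b : σ → ℝ} {x : σ → K} (hx : ∀ j, V.v (x j) = ((-(b j) : ℝ) : WithTop ℝ))
    (hres : ∑ i ∈ maximizers I a b, V.Pc (c i) * ∏ j, V.Pc (x j) ^ i j = 0) :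
    ∃ y : σ → K, ∑ i ∈ I, c i * ∏ j, y j ^ i j = 0 ∧ ∀ j, V.SamePrincipalTerm (y j) (x j) := by
  have hx0 : ∀ j, x j ≠ 0 := fun j => V.ne_zero_of_v_eq_coe (hx j)
  obtain ⟨x', hvx', hres'⟩ :=
    V.exists_residual_eval_ne_zero hI (fun i hi => V.ne_zero_of_v_eq_coe (ha i hi)) a b hx0
  obtain ⟨t, ht, hroot⟩ := V.exists_root_on_segment (I := I) (c := c) (p := x) (q := x')
    ((not_lt.1 ((V.residual_eval_eq_zero_iff hI ha fun j => (hvx' j).trans (hx j)).not.1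
      hres')).trans_lt ((V.residual_eval_eq_zero_iff hI ha hx).1 hres))
  refine ⟨_, hroot, fun j => V.samePrincipalTerm_add (hx0 j) (V.v_lt_v_mul (hx0 j) ?_ ht)⟩
  simpa only [hvx' j, min_self] using V.min_le_v_sub (x' j) (x j)

end ValData

end Tropical

theorem lifting_root_iff_tropical_root_and_residual_root_general
    {K k : Type} [Field K] [IsAlgClosed K] [Field k] (V : ValData K k)
    (n : ℕ) (I : Finset (Fin n → ℕ)) (hI : I.Nonempty)
    (c : (Fin n → ℕ) → K)
    (a : (Fin n → ℕ) → ℝ) (ha : ∀ i ∈ I, V.v (c i) = ((-(a i) : ℝ) : WithTop ℝ))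
    (btil : Fin n → K)
    (b : Fin n → ℝ) (hvb : ∀ j, V.v (btil j) = ((-(b j) : ℝ) : WithTop ℝ)) :
    (∃ ctil : Fin n → K,
        (∑ i ∈ I, c i * ∏ j, ctil j ^ i j) = 0 ∧
        ∀ j, ctil j ≠ 0 ∧ V.v (ctil j) = V.v (btil j) ∧
          V.v (btil j) < V.v (ctil j - btil j)) ↔
      ((∃ i ∈ I, ∃ i' ∈ I, i ≠ i' ∧
          (a i + ∑ j, (i j : ℝ) * b j) = (a i' + ∑ j, (i' j : ℝ) * b j) ∧
          ∀ l ∈ I, (a l + ∑ j, (l j : ℝ) * b j) ≤ (a i + ∑ j, (i j : ℝ) * b j)) ∧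
        (∑ i ∈ I.filter (fun i => ∀ l ∈ I,
              (a l + ∑ j, (l j : ℝ) * b j) ≤ (a i + ∑ j, (i j : ℝ) * b j)),
            V.Pc (c i) * ∏ j, V.Pc (btil j) ^ i j) = 0) := by
  change (∃ ctil : Fin n → K, _ ∧ ∀ j, V.SamePrincipalTerm (ctil j) (btil j)) ↔
    IsTropicalRoot I a b ∧ ∑ i ∈ maximizers I a b, V.Pc (c i) * ∏ j, V.Pc (btil j) ^ i j = 0
  constructor
  · rintro ⟨ctil, hroot, hpt⟩
    have hres := V.residual_eval_eq_zero_of_root hI ha hvb hpt hroot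
    refine ⟨isTropicalRoot_of_residual_eval_eq_zero hI (fun i hi => ?_) (fun j => ?_) hres, hres⟩
    · exact V.Pc_ne_zero _ (V.ne_zero_of_v_eq_coe (ha i hi))
    · exact V.Pc_ne_zero _ (V.ne_zero_of_v_eq_coe (hvb j))
  · rintro ⟨-, hres⟩
    exact V.exists_root_samePrincipalTerm hI ha hvb hres

/-- **Theorem 1, constructive lifting / Kapranov.**
Let `f̃ = Σ_{i ∈ I} c_i x^i ∈ 𝕂[x₁,…,xₙ]` (all `c_i ≠ 0`, `I ≠ ∅`) have tropicalization
`f = "Σ_{i ∈ I} a_i x^i"` (i.e. `v (c_i) = −a_i`), and let `b̃ ∈ (𝕂*)ⁿ` be any point, with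
`b = T(b̃)` (i.e. `v (b̃_j) = −b_j`).  Then `f̃` has a root `c̃ ∈ (𝕂*)ⁿ` with
`Pt(c̃_j) = Pt(b̃_j)` for all `j` (i.e. `v c̃_j = v b̃_j < v (c̃_j − b̃_j)`) if and only if
`b` is a zero of the tropical polynomial `f` (the maximum `max_{i ∈ I} (a_i + i·b)` is
attained at least twice) and `(Pc(b̃₁),…,Pc(b̃ₙ))` is a root of the residual polynomial
`f̃_b = Σ_{i ∈ J} Pc(c_i) x^i` of `f̃` over `b` (where `J` is the set of indices attaining
the maximum). -/
theorem lifting_root_iff_tropical_root_and_residual_root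
    {K k : Type} [Field K] [IsAlgClosed K] [Field k] (V : ValData K k)
    (n : ℕ) (I : Finset (Fin n → ℕ)) (hI : I.Nonempty)
    (c : (Fin n → ℕ) → K) (hc : ∀ i ∈ I, c i ≠ 0)
    (a : (Fin n → ℕ) → ℝ) (ha : ∀ i ∈ I, V.v (c i) = ((-(a i) : ℝ) : WithTop ℝ))
    (btil : Fin n → K) (hb : ∀ j, btil j ≠ 0)
    (b : Fin n → ℝ) (hvb : ∀ j, V.v (btil j) = ((-(b j) : ℝ) : WithTop ℝ)) :
    (∃ ctil : Fin n → K,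
        (∑ i ∈ I, c i * ∏ j, ctil j ^ i j) = 0 ∧
        ∀ j, ctil j ≠ 0 ∧ V.v (ctil j) = V.v (btil j) ∧
          V.v (btil j) < V.v (ctil j - btil j)) ↔
      ((∃ i ∈ I, ∃ i' ∈ I, i ≠ i' ∧
          (a i + ∑ j, (i j : ℝ) * b j) = (a i' + ∑ j, (i' j : ℝ) * b j) ∧
          ∀ l ∈ I, (a l + ∑ j, (l j : ℝ) * b j) ≤ (a i + ∑ j, (i j : ℝ) * b j)) ∧
        (∑ i ∈ I.filter (fun i => ∀ l ∈ I,
              (a l + ∑ j, (l j : ℝ) * b j) ≤ (a i + ∑ j, (i j : ℝ) * b j)),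
            V.Pc (c i) * ∏ j, V.Pc (btil j) ^ i j) = 0) :=
  lifting_root_iff_tropical_root_and_residual_root_general V n I hI c a ha btil b hvb
end
end

section
/- Let f be a tropical polynomial in n variables with Newton polytope Δ and induced regular subdivision Subdiv(Δ). Then there is a bijection Λ ↦ V^Λ between the cells of Subdiv(Δ) and the cells of the polyhedral complex 𝒯(f) (together with the connected components of ℝⁿ ∖ closure(𝒯(f))) such that: every k-dimensional cell Λ corresponds to a cell V^Λ of dimension n−k whose affine span is orthogonal to Λ (for k = 0, V^Λ is a connected component of ℝⁿ ∖ closure(𝒯(f))); Λ₁ ≠ Λ₂ implies V^{Λ₁} ∩ V^{Λ₂} = ∅; Λ₁ ⊂ closure(Λ₂) implies V^{Λ₂} ⊂ closure(V^{Λ₁}); 𝒯(f) is the disjoint union of the V^Λ over cells Λ of positive dimension; and V^Λ is unbounded if and only if Λ ⊆ ∂Δ. -/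
noncomputable section
open scoped Classical

/-- The value of the monomial `i` of the tropical polynomial `(I, a)` in `n` variables at
the point `x ∈ ℝⁿ`. -/
def tvalN (n : ℕ) (a : (Fin n → ℕ) → ℝ) (i : Fin n → ℕ) (x : Fin n → ℝ) : ℝ :=
  a i + ∑ j, (i j : ℝ) * x j

/-- The set of zeroes of the tropical polynomial `(I, a)`: the points where the maximum
`max_{i ∈ I} (a_i + i·x)` is attained for at least two indices. -/
def tropSetN (n : ℕ) (I : Finset (Fin n → ℕ)) (a : (Fin n → ℕ) → ℝ) : Set (Fin n → ℝ) :=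
  {x | ∃ i ∈ I, ∃ j ∈ I, i ≠ j ∧ tvalN n a i x = tvalN n a j x ∧
    ∀ l ∈ I, tvalN n a l x ≤ tvalN n a i x}

/-- The cell of the regular subdivision `Subdiv(Δ)` induced by `(I, a)` that is dual to the
cell (of the curve or of the complement) containing `x`: the convex hull of the set of
monomials attaining the maximum at `x`.  The cells of `Subdiv(Δ)` are exactly the sets of
this form. -/
def cellAt (n : ℕ) (I : Finset (Fin n → ℕ)) (a : (Fin n → ℕ) → ℝ) (x : Fin n → ℝ) :
    Set (Fin n → ℝ) :=
  convexHull ℝ ((fun (i : Fin n → ℕ) (j : Fin n) => (i j : ℝ)) ''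
    ((I.filter fun i => ∀ l ∈ I, tvalN n a l x ≤ tvalN n a i x) : Set (Fin n → ℕ)))

/-- The (closed) cell of the polyhedral decomposition of `ℝⁿ` induced by `(I, a)` dual to a
cell `Λ` of `Subdiv(Δ)`: `V^Λ = {x | cellAt x = Λ}`. -/
def dualSupport (n : ℕ) (I : Finset (Fin n → ℕ)) (a : (Fin n → ℕ) → ℝ)
    (Λ : Set (Fin n → ℝ)) : Set (Fin n → ℝ) :=
  {x | cellAt n I a x = Λ}

/-- The dimension of a subset of `ℝⁿ` (the dimension of its affine span). -/
def dimA {n : ℕ} (s : Set (Fin n → ℝ)) : ℕ := Module.finrank ℝ (vectorSpan ℝ s)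

/-!
For `x ∈ ℝⁿ` let `S(x)` be the set of monomials attaining the maximum at `x`, so that
`cellAt x = conv S(x)`. A cell determines its monomials: if `i` attains the maximum somewhere and
`i ∈ conv S(x)`, a half-space argument shows that `i` attains it at `x`. Hence
`V^Λ = {x | S(x) = S}` for `Λ = conv S`.

Near any point the set of maximizers can only shrink, so `V^Λ` is an open piece of the affine
subspace on which all monomials of `S` tie; its direction is the orthogonal complement of the
direction of `Λ`, which gives the dimension count. On an open segment the maximizers are the common
maximizers of the endpoints; this gives convexity of `V^Λ` and the closure relation. When `S` is a
singleton, the `V^Λ` are disjoint open convex regions covering the complement of `𝒯(f)`, hence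
its connected components. Finally, `V^Λ` is unbounded and `Λ ⊆ ∂Δ` are both equivalent to the
existence of some `u ≠ 0` whose maximum over `Δ` is attained on all of `Λ`: `u` is a recession
direction of the polyhedron `V^Λ` in the first case, and the normal of a supporting hyperplane of
`Δ` at the centroid of `Λ` in the second.
-/

open Bornology Filter Function Topology

namespace TropicalDual

section Argmax

variable {β : Type*}

def argmaxOn (s : Finset β) (f : β → ℝ) : Finset β :=
  s.filter fun i => ∀ l ∈ s, f l ≤ f i

variable {s : Finset β} {f g : β → ℝ} {i l : β}

theorem mem_argmaxOn : i ∈ argmaxOn s f ↔ i ∈ s ∧ ∀ l ∈ s, f l ≤ f i :=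
  Finset.mem_filter

theorem argmaxOn_subset : argmaxOn s f ⊆ s :=
  Finset.filter_subset _ _

theorem argmaxOn_nonempty (hs : s.Nonempty) : (argmaxOn s f).Nonempty := by
  obtain ⟨i, hi, hmax⟩ := s.exists_max_image f hs
  exact ⟨i, mem_argmaxOn.2 ⟨hi, hmax⟩⟩

theorem mem_argmaxOn_of_le (hi : i ∈ argmaxOn s f) (hl : l ∈ s) (h : f i ≤ f l) :
    l ∈ argmaxOn s f :=
  mem_argmaxOn.2 ⟨hl, fun m hm => ((mem_argmaxOn.1 hi).2 m hm).trans h⟩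

theorem argmaxOn_add [DecidableEq β] (h : (argmaxOn s f ∩ argmaxOn s g).Nonempty) :
    argmaxOn s (f + g) = argmaxOn s f ∩ argmaxOn s g := by
  obtain ⟨m, hm⟩ := h
  obtain ⟨hmf, hmg⟩ := Finset.mem_inter.1 hm
  obtain ⟨hms, hfm⟩ := mem_argmaxOn.1 hmf
  have hgm := (mem_argmaxOn.1 hmg).2
  ext l
  rw [Finset.mem_inter]
  constructor
  · intro hl
    obtain ⟨hls, hmax⟩ := mem_argmaxOn.1 hl
    have hsum : f m + g m ≤ f l + g l := hmax _ hms
    have hfl := hfm l hls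
    have hgl := hgm l hls
    exact ⟨mem_argmaxOn_of_le hmf hls (by linarith), mem_argmaxOn_of_le hmg hls (by linarith)⟩
  · rintro ⟨hlf, hlg⟩
    exact mem_argmaxOn.2 ⟨argmaxOn_subset hlf,
      fun k hk => add_le_add ((mem_argmaxOn.1 hlf).2 k hk) ((mem_argmaxOn.1 hlg).2 k hk)⟩

theorem argmaxOn_add_of_subset (hfg : argmaxOn s f ⊆ argmaxOn s g)
    (hf : (argmaxOn s f).Nonempty) : argmaxOn s (f + g) = argmaxOn s f := by
  rw [argmaxOn_add (by rwa [Finset.inter_eq_left.2 hfg]), Finset.inter_eq_left.2 hfg]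

theorem argmaxOn_const_mul {c : ℝ} (hc : 0 < c) :
    argmaxOn s (fun i => c * f i) = argmaxOn s f := by
  simp only [argmaxOn, mul_le_mul_iff_right₀ hc]

theorem eventually_argmaxOn_subset {X : Type*} [TopologicalSpace X] {F : β → X → ℝ}
    (hF : ∀ i, Continuous (F i)) (x : X) :
    ∀ᶠ y in 𝓝 x, argmaxOn s (F · y) ⊆ argmaxOn s (F · x) := by
  have : ∀ i ∈ s, ∀ᶠ y in 𝓝 x, i ∈ argmaxOn s (F · y) → i ∈ argmaxOn s (F · x) := by
    intro i hi
    by_cases hix : i ∈ argmaxOn s (F · x)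
    · exact Eventually.of_forall fun _ _ => hix
    obtain ⟨m, hm, hlt⟩ : ∃ m ∈ s, F i x < F m x := by
      simpa [mem_argmaxOn, hi] using hix
    filter_upwards [(hF i).continuousAt.eventually_lt (hF m).continuousAt hlt] with y hy hiy
    exact absurd ((mem_argmaxOn.1 hiy).2 m hm) hy.not_ge
  filter_upwards [(eventually_all_finset s).2 this] with y hy i hi
  exact hy i (argmaxOn_subset hi) hi

end Argmax

section Geometry

theorem tendsto_add_smul_nhdsWithin {E : Type*} [AddCommGroup E] [Module ℝ E] [TopologicalSpace E]
    [ContinuousAdd E] [ContinuousSMul ℝ E] (x v : E) (S : Set ℝ) :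
    Tendsto (fun t : ℝ => x + t • v) (𝓝[S] 0) (𝓝 x) := by
  have hcont : Continuous fun t : ℝ => x + t • v := by fun_prop
  simpa using (hcont.tendsto 0).mono_left nhdsWithin_le_nhds

theorem vectorSpan_eq_direction_of_eventually {E : Type*} [AddCommGroup E] [Module ℝ E]
    [TopologicalSpace E] [ContinuousAdd E] [ContinuousSMul ℝ E] {A : AffineSubspace ℝ E}
    {s : Set E} {x : E} (hsA : s ⊆ A) (hx : x ∈ A) (hs : ∀ᶠ y in 𝓝 x, y ∈ A → y ∈ s) :
    vectorSpan ℝ s = A.direction := by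
  refine le_antisymm (A.direction_eq_vectorSpan ▸ vectorSpan_mono ℝ hsA) fun v hv => ?_
  obtain ⟨t, hts, ht0⟩ :=
    (((tendsto_add_smul_nhdsWithin x v {0}ᶜ).eventually hs).and self_mem_nhdsWithin).exists
  have hxt : x + t • v ∈ s := by
    refine hts ?_
    rw [add_comm]
    exact AffineSubspace.vadd_mem_of_mem_direction (A.direction.smul_mem t hv) hx
  have hmem := vsub_mem_vectorSpan ℝ hxt (hs.self_of_nhds hx)
  rw [vsub_eq_sub, add_sub_cancel_left] at hmem
  simpa [inv_smul_smul₀ ht0] using (vectorSpan ℝ s).smul_mem t⁻¹ hmem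

theorem not_isBounded_of_forall_add_smul_mem {E : Type*} [NormedAddCommGroup E] [NormedSpace ℝ E]
    {s : Set E} {x u : E} (hu : u ≠ 0) (h : ∀ t : ℝ, 0 ≤ t → x + t • u ∈ s) :
    ¬ IsBounded s := by
  intro hb
  obtain ⟨C, hC⟩ := isBounded_iff_forall_norm_le.1 hb
  have hu' : 0 < ‖u‖ := norm_pos_iff.2 hu
  have hC0 : 0 ≤ C := (norm_nonneg x).trans (by simpa using hC _ (h 0 le_rfl))
  set t := (C + ‖x‖ + 1) / ‖u‖
  have ht : 0 ≤ t := by positivity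
  have htriangle : ‖t • u‖ ≤ ‖x + t • u‖ + ‖x‖ := by
    simpa using norm_sub_le (x + t • u) x
  rw [norm_smul, Real.norm_of_nonneg ht, div_mul_cancel₀ _ hu'.ne'] at htriangle
  linarith [hC _ (h t ht)]

variable {ι : Type*} [Fintype ι]

def dotOrthogonal (Z : Submodule ℝ (ι → ℝ)) : Submodule ℝ (ι → ℝ) :=
  LinearMap.BilinForm.orthogonal (dotProductBilin ℝ ℝ) Z

theorem mem_dotOrthogonal {Z : Submodule ℝ (ι → ℝ)} {v : ι → ℝ} :
    v ∈ dotOrthogonal Z ↔ ∀ z ∈ Z, z ⬝ᵥ v = 0 :=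
  Iff.rfl

theorem finrank_add_finrank_dotOrthogonal (Z : Submodule ℝ (ι → ℝ)) :
    Module.finrank ℝ Z + Module.finrank ℝ (dotOrthogonal Z) = Fintype.card ι := by
  have hker : LinearMap.ker (dotProductBilin ℝ ℝ : LinearMap.BilinForm ℝ (ι → ℝ)) = ⊥ :=
    LinearMap.separatingLeft_iff_ker_eq_bot.1 fun v hv => dotProduct_self_eq_zero.1 (hv v)
  rw [dotOrthogonal, LinearMap.BilinForm.finrank_add_finrank_orthogonal', hker, inf_bot_eq,
    finrank_bot, add_zero, Module.finrank_fintype_fun_eq_card]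

theorem mem_dotOrthogonal_vectorSpan_iff {s : Set (ι → ℝ)} {v : ι → ℝ} :
    v ∈ dotOrthogonal (vectorSpan ℝ s) ↔ ∀ p ∈ s, ∀ q ∈ s, p ⬝ᵥ v = q ⬝ᵥ v := by
  rw [mem_dotOrthogonal]
  constructor
  · intro h p hp q hq
    simpa [sub_dotProduct, sub_eq_zero] using h _ (vsub_mem_vectorSpan ℝ hp hq)
  · intro h z hz
    have hle : vectorSpan ℝ s ≤ LinearMap.ker ((dotProductBilin ℝ ℝ).flip v) := by
      rw [vectorSpan_def, Submodule.span_le]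
      rintro _ ⟨p, hp, q, hq, rfl⟩
      simp [h p hp q hq]
    exact hle hz

theorem exists_ne_zero_forall_dotProduct_nonpos_of_not_isBounded {κ : Type*}
    {s : Set (ι → ℝ)} (hs : ¬ IsBounded s) {v : κ → ι → ℝ} {c : κ → ℝ}
    (h : ∀ x ∈ s, ∀ k, v k ⬝ᵥ x ≤ c k) : ∃ u ≠ 0, ∀ k, v k ⬝ᵥ u ≤ 0 := by
  have hunb : ∀ N : ℕ, ∃ x ∈ s, (N : ℝ) + 1 < ‖x‖ := by
    intro N
    by_contra! hN
    exact hs (isBounded_iff_forall_norm_le.2 ⟨_, hN⟩)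
  choose x hxs hxN using hunb
  have hxpos : ∀ N, 0 < ‖x N‖ := fun N => by linarith [hxN N, (N.cast_nonneg : (0 : ℝ) ≤ N)]
  have hsphere : ∀ N, ‖x N‖⁻¹ • x N ∈ Metric.sphere (0 : ι → ℝ) 1 := fun N => by
    simp [norm_smul, (hxpos N).ne']
  obtain ⟨u, hu, φ, hφ, hlim⟩ := (isCompact_sphere 0 1).tendsto_subseq hsphere
  refine ⟨u, fun h0 => by simp [h0] at hu, fun k => ?_⟩
  have hnorm : Tendsto (fun N => ‖x (φ N)‖⁻¹ * c k) atTop (𝓝 0) := by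
    have hgrow : Tendsto (fun N => (φ N : ℝ) + 1) atTop atTop :=
      tendsto_atTop_add_const_right _ 1 (tendsto_natCast_atTop_atTop.comp hφ.tendsto_atTop)
    simpa using ((tendsto_atTop_mono (fun N => (hxN (φ N)).le) hgrow).inv_tendsto_atTop).mul_const
      (c k)
  refine le_of_tendsto_of_tendsto'
    (((continuous_const.dotProduct continuous_id).tendsto u).comp hlim) hnorm fun N => ?_
  simp only [Function.comp_apply, id, dotProduct_smul, smul_eq_mul]
  exact mul_le_mul_of_nonneg_left (h _ (hxs _) k) (inv_nonneg.2 (norm_nonneg _))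

theorem notMem_interior_of_subset_dotProduct_le {s : Set (ι → ℝ)} {u z : ι → ℝ} {c : ℝ}
    (hu : u ≠ 0) (hs : s ⊆ {p | p ⬝ᵥ u ≤ c}) (hz : c ≤ z ⬝ᵥ u) : z ∉ interior s := by
  intro hint
  obtain ⟨t, hts, ht0⟩ := (((tendsto_add_smul_nhdsWithin z u (Set.Ioi 0)).eventually
    (mem_interior_iff_mem_nhds.1 hint)).and self_mem_nhdsWithin).exists
  have hle : (z + t • u) ⬝ᵥ u ≤ c := hs hts
  have huu : 0 < u ⬝ᵥ u := by simpa using (Matrix.dotProduct_self_star_pos_iff (v := u)).2 hu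
  rw [add_dotProduct, smul_dotProduct, smul_eq_mul] at hle
  nlinarith [show (0 : ℝ) < t from ht0]

theorem exists_ne_zero_dotProduct_le_of_notMem_interior {s : Set (ι → ℝ)} (hs : Convex ℝ s)
    {z : ι → ℝ} (hzs : z ∈ s) (hz : z ∉ interior s) :
    ∃ u ≠ 0, ∀ p ∈ s, p ⬝ᵥ u ≤ z ⬝ᵥ u := by
  have hdual : ∀ f : Module.Dual ℝ (ι → ℝ), f ≠ 0 → ∃ u ≠ 0, ∀ p, f p = p ⬝ᵥ u := by
    intro f hf
    refine ⟨(dotProductEquiv ℝ ι).symm f, by simpa using hf, fun p => ?_⟩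
    rw [dotProduct_comm, ← dotProductEquiv_apply_apply, LinearEquiv.apply_symm_apply]
  by_cases hint : (interior s).Nonempty
  · obtain ⟨f, hf0, hf⟩ := geometric_hahn_banach_of_nonempty_interior_point hs hz hint
    obtain ⟨u, hu, hfu⟩ :=
      hdual f.toLinearMap fun h0 => hf0 (ContinuousLinearMap.coe_injective h0)
    simp only [ContinuousLinearMap.coe_coe] at hfu
    exact ⟨u, hu, fun p hp => by simpa only [hfu] using hf p hp⟩
  · have hspan : vectorSpan ℝ s < ⊤ := by
      rw [lt_top_iff_ne_top]
      intro htop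
      apply hint
      rw [hs.interior_nonempty_iff_affineSpan_eq_top,
        AffineSubspace.affineSpan_eq_top_iff_vectorSpan_eq_top_of_nonempty ℝ _ _ ⟨z, hzs⟩]
      exact htop
    obtain ⟨f, hf0, hker⟩ := (vectorSpan ℝ s).exists_le_ker_of_lt_top hspan
    obtain ⟨u, hu, hfu⟩ := hdual f hf0
    refine ⟨u, hu, fun p hp => le_of_eq ?_⟩
    have hpz := hker (vsub_mem_vectorSpan ℝ hp hzs)
    rwa [LinearMap.mem_ker, vsub_eq_sub, map_sub, sub_eq_zero, hfu, hfu] at hpz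

theorem isLinearMap_dotProduct_left (u : ι → ℝ) : IsLinearMap ℝ fun p : ι → ℝ => p ⬝ᵥ u :=
  ⟨fun p q => add_dotProduct p q u, fun c p => smul_dotProduct c p u⟩

/-- The witness is the centroid of `T`. -/
theorem exists_mem_convexHull_forall_dotProduct_eq {T : Finset (ι → ℝ)} (hT : T.Nonempty) :
    ∃ z ∈ convexHull ℝ (T : Set (ι → ℝ)), ∀ u : ι → ℝ,
      (∀ q ∈ T, q ⬝ᵥ u ≤ z ⬝ᵥ u) → ∀ q ∈ T, q ⬝ᵥ u = z ⬝ᵥ u := by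
  have hcard : (T.card : ℝ) ≠ 0 := by exact_mod_cast hT.card_pos.ne'
  refine ⟨T.centerMass (fun _ => 1) id,
    T.centerMass_mem_convexHull (fun _ _ => zero_le_one) (by simpa using hT) fun q hq => hq,
    fun u hle => (Finset.sum_eq_sum_iff_of_le hle).1 ?_⟩
  simp only [Finset.centerMass, Finset.sum_const, nsmul_eq_mul, mul_one, one_smul, id,
    smul_dotProduct, sum_dotProduct, smul_eq_mul]
  field_simp

theorem convexHull_subset_frontier_convexHull_iff {P Q : Set (ι → ℝ)} (hP : P.Finite)
    (hQP : Q ⊆ P) (hQ : Q.Nonempty) :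
    convexHull ℝ Q ⊆ frontier (convexHull ℝ P) ↔
      ∃ u ≠ 0, ∀ p ∈ P, ∀ q ∈ Q, p ⬝ᵥ u ≤ q ⬝ᵥ u := by
  rw [(hP.isCompact_convexHull ℝ).isClosed.frontier_eq]
  constructor
  · intro h
    have hQfin := hP.subset hQP
    obtain ⟨z, hzQ, hconst⟩ :=
      exists_mem_convexHull_forall_dotProduct_eq (hQfin.toFinset_nonempty.2 hQ)
    rw [Set.Finite.coe_toFinset] at hzQ
    obtain ⟨hzP, hzint⟩ := h hzQ
    obtain ⟨u, hu, hmax⟩ :=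
      exists_ne_zero_dotProduct_le_of_notMem_interior (convex_convexHull ℝ P) hzP hzint
    have hsub : ∀ p ∈ P, p ∈ convexHull ℝ P := fun p hp => subset_convexHull ℝ P hp
    have heq := hconst u fun q hq => hmax q (hsub q (hQP (hQfin.mem_toFinset.1 hq)))
    exact ⟨u, hu, fun p hp q hq => (hmax p (hsub p hp)).trans (heq q (hQfin.mem_toFinset.2 hq)).ge⟩
  · rintro ⟨u, hu, hmax⟩ z hz
    obtain ⟨q₀, hq₀⟩ := hQ
    refine ⟨convexHull_mono hQP hz, notMem_interior_of_subset_dotProduct_le hu (c := q₀ ⬝ᵥ u)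
      (convexHull_min (fun p hp => hmax p hp q₀ hq₀)
        (convex_halfSpace_le (isLinearMap_dotProduct_left u) _)) ?_⟩
    exact convexHull_min (fun q hq => hmax q₀ (hQP hq₀) q hq)
      (convex_halfSpace_ge (isLinearMap_dotProduct_left u) _) hz

end Geometry

theorem connectedComponentIn_eq_of_iUnion_eq {X κ : Type*} [TopologicalSpace X] {F : Set X}
    {U : κ → Set X} (hUF : ⋃ i, U i = F) (hopen : ∀ i, IsOpen (U i))
    (hconn : ∀ i, IsPreconnected (U i)) (hdisj : Pairwise (Disjoint on U)) {i : κ} {x : X}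
    (hx : x ∈ U i) : connectedComponentIn F x = U i := by
  have hUi : U i ⊆ F := hUF ▸ Set.subset_iUnion U i
  refine Set.Subset.antisymm ?_ ((hconn i).subset_connectedComponentIn hx hUi)
  refine isPreconnected_connectedComponentIn.subset_left_of_subset_union (hopen i)
    (isOpen_iUnion fun j => isOpen_iUnion fun _ : j ≠ i => hopen j)
    (Set.disjoint_iUnion_right.2 fun j => Set.disjoint_iUnion_right.2 fun hj => hdisj hj.symm)
    ?_ ⟨x, mem_connectedComponentIn (hUi hx), hx⟩
  refine (connectedComponentIn_subset F x).trans ?_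
  rw [← hUF]
  rintro y ⟨_, ⟨j, rfl⟩, hy⟩
  by_cases hji : j = i
  · exact Or.inl (hji ▸ hy)
  · exact Or.inr (Set.mem_iUnion₂.2 ⟨j, hji, hy⟩)

section Cells

variable {n : ℕ} {I : Finset (Fin n → ℕ)} {a : (Fin n → ℕ) → ℝ} {x x₀ y z : Fin n → ℝ}
  {i j : Fin n → ℕ}

def toReal (i : Fin n → ℕ) : Fin n → ℝ := fun j => (i j : ℝ)

theorem toReal_injective : Injective (toReal (n := n)) :=
  fun _ _ h => funext fun k => Nat.cast_injective (congrFun h k)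

theorem tvalN_eq : tvalN n a i x = a i + toReal i ⬝ᵥ x := rfl

theorem continuous_tvalN (i : Fin n → ℕ) : Continuous (tvalN n a i) :=
  continuous_const.add (continuous_const.dotProduct continuous_id)

variable (I a) in
def maximizers (x : Fin n → ℝ) : Finset (Fin n → ℕ) :=
  argmaxOn I fun i => tvalN n a i x

theorem mem_maximizers : i ∈ maximizers I a x ↔ i ∈ I ∧ ∀ l ∈ I, tvalN n a l x ≤ tvalN n a i x :=
  mem_argmaxOn

theorem maximizers_subset : maximizers I a x ⊆ I :=
  argmaxOn_subset

theorem maximizers_nonempty (hI : I.Nonempty) (x : Fin n → ℝ) : (maximizers I a x).Nonempty :=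
  argmaxOn_nonempty hI

theorem tvalN_eq_of_mem_maximizers (hi : i ∈ maximizers I a x) (hj : j ∈ maximizers I a x) :
    tvalN n a i x = tvalN n a j x :=
  le_antisymm ((mem_maximizers.1 hj).2 i (maximizers_subset hi))
    ((mem_maximizers.1 hi).2 j (maximizers_subset hj))

theorem eventually_maximizers_subset (x : Fin n → ℝ) :
    ∀ᶠ y in 𝓝 x, maximizers I a y ⊆ maximizers I a x :=
  eventually_argmaxOn_subset continuous_tvalN x

theorem cellAt_eq_convexHull (x : Fin n → ℝ) :
    cellAt n I a x = convexHull ℝ (toReal '' (maximizers I a x : Set (Fin n → ℕ))) :=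
  rfl

/-- The cells of the subdivision determine the maximizing monomials. -/
theorem mem_maximizers_of_toReal_mem_cellAt (hiy : i ∈ maximizers I a y)
    (hix : toReal i ∈ cellAt n I a x) : i ∈ maximizers I a x := by
  obtain ⟨j, hj⟩ : (maximizers I a x).Nonempty := by
    rw [cellAt_eq_convexHull] at hix
    exact Finset.coe_nonempty.1 (convexHull_nonempty_iff.1 ⟨_, hix⟩).of_image
  -- A maximizer at `y` lying in this half-space is a maximizer at `x`.
  have hcell : cellAt n I a x ⊆ {p | p ⬝ᵥ (y - x) ≤ tvalN n a i y - tvalN n a j x} := by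
    rw [cellAt_eq_convexHull]
    refine convexHull_min ?_ (convex_halfSpace_le (isLinearMap_dotProduct_left _) _)
    rintro _ ⟨s, hs, rfl⟩
    have hsy := (mem_maximizers.1 hiy).2 s (maximizers_subset hs)
    have hsx := (mem_maximizers.1 hs).2 j (maximizers_subset hj)
    simp only [Set.mem_ofPred_eq, dotProduct_sub, tvalN_eq] at hsy hsx ⊢
    linarith
  have hi := hcell hix
  refine mem_argmaxOn_of_le hj (maximizers_subset hiy) ?_
  simp only [Set.mem_ofPred_eq, dotProduct_sub, tvalN_eq] at hi ⊢
  linarith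

theorem cellAt_subset_cellAt_iff :
    cellAt n I a y ⊆ cellAt n I a x ↔ maximizers I a y ⊆ maximizers I a x :=
  ⟨fun h _ hi => mem_maximizers_of_toReal_mem_cellAt hi (h (subset_convexHull ℝ _ ⟨_, hi, rfl⟩)),
    fun h => convexHull_mono (Set.image_mono (Finset.coe_subset.2 h))⟩

theorem mem_dualSupport_cellAt :
    x ∈ dualSupport n I a (cellAt n I a x₀) ↔ maximizers I a x = maximizers I a x₀ := by
  rw [dualSupport, Set.mem_ofPred_eq, subset_antisymm_iff, subset_antisymm_iff,
    cellAt_subset_cellAt_iff, cellAt_subset_cellAt_iff]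

theorem isClosed_cellAt (x : Fin n → ℝ) : IsClosed (cellAt n I a x) :=
  (((maximizers I a x).finite_toSet.image _).isCompact_convexHull ℝ).isClosed

theorem vectorSpan_cellAt (x : Fin n → ℝ) :
    vectorSpan ℝ (cellAt n I a x) = vectorSpan ℝ (toReal '' (maximizers I a x : Set _)) := by
  rw [← direction_affineSpan, cellAt_eq_convexHull, affineSpan_convexHull, direction_affineSpan]

theorem dimA_cellAt_eq_zero_iff : dimA (cellAt n I a x) = 0 ↔ ¬ (maximizers I a x).Nontrivial := by
  rw [dimA, Submodule.finrank_eq_zero, vectorSpan_cellAt, vectorSpan_eq_bot_iff_subsingleton,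
    toReal_injective.subsingleton_image_iff, Finset.Nontrivial, Set.not_nontrivial_iff]

theorem mem_tropSetN_iff_nontrivial : x ∈ tropSetN n I a ↔ (maximizers I a x).Nontrivial := by
  constructor
  · rintro ⟨i, hi, j, hj, hij, heq, hmax⟩
    exact ⟨i, mem_maximizers.2 ⟨hi, hmax⟩, j, mem_maximizers.2 ⟨hj, heq ▸ hmax⟩, hij⟩
  · rintro ⟨i, hi, j, hj, hij⟩
    exact ⟨i, maximizers_subset hi, j, maximizers_subset hj, hij, tvalN_eq_of_mem_maximizers hi hj,
      (mem_maximizers.1 hi).2⟩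

theorem mem_tropSetN_iff_dimA_ne_zero : x ∈ tropSetN n I a ↔ dimA (cellAt n I a x) ≠ 0 := by
  rw [ne_eq, dimA_cellAt_eq_zero_iff, not_not, mem_tropSetN_iff_nontrivial]

theorem tvalN_add_smul (i : Fin n → ℕ) (x u : Fin n → ℝ) (t : ℝ) :
    tvalN n a i (x + t • u) = tvalN n a i x + t * (toReal i ⬝ᵥ u) := by
  rw [tvalN_eq, tvalN_eq, dotProduct_add, dotProduct_smul, smul_eq_mul, add_assoc]

theorem tvalN_smul_add_smul {s t : ℝ} (hst : s + t = 1) (i : Fin n → ℕ) (x y : Fin n → ℝ) :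
    tvalN n a i (s • x + t • y) = s * tvalN n a i x + t * tvalN n a i y := by
  simp only [tvalN_eq, dotProduct_add, dotProduct_smul, smul_eq_mul]
  linear_combination -(a i) * hst

theorem maximizers_eq_inter_of_mem_openSegment
    (hxy : (maximizers I a x ∩ maximizers I a y).Nonempty) (hz : z ∈ openSegment ℝ x y) :
    maximizers I a z = maximizers I a x ∩ maximizers I a y := by
  obtain ⟨s, t, hs, ht, hst, rfl⟩ := hz
  have hsplit : (fun i => tvalN n a i (s • x + t • y)) =
      (fun i => s * tvalN n a i x) + fun i => t * tvalN n a i y :=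
    funext fun i => tvalN_smul_add_smul hst i x y
  rw [maximizers, hsplit, argmaxOn_add, argmaxOn_const_mul hs, argmaxOn_const_mul ht]
  · rfl
  · rwa [argmaxOn_const_mul hs, argmaxOn_const_mul ht]

theorem convex_setOf_maximizers_eq {S : Finset (Fin n → ℕ)} (hS : S.Nonempty) :
    Convex ℝ {x | maximizers I a x = S} := by
  refine convex_iff_openSegment_subset.2 fun x hx y hy z hz => ?_
  rw [Set.mem_ofPred_eq] at hx hy ⊢
  rw [maximizers_eq_inter_of_mem_openSegment (by rwa [hx, hy, Finset.inter_self]) hz, hx, hy,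
    Finset.inter_self]

theorem mem_closure_dualSupport_cellAt (hI : I.Nonempty)
    (h : maximizers I a y ⊆ maximizers I a x) :
    x ∈ closure (dualSupport n I a (cellAt n I a y)) := by
  have hxy : (maximizers I a x ∩ maximizers I a y).Nonempty := by
    rw [Finset.inter_eq_right.2 h]
    exact maximizers_nonempty hI y
  have hseg : openSegment ℝ x y ⊆ dualSupport n I a (cellAt n I a y) := fun z hz => by
    rw [mem_dualSupport_cellAt, maximizers_eq_inter_of_mem_openSegment hxy hz,
      Finset.inter_eq_right.2 h]
  exact closure_mono hseg (segment_subset_closure_openSegment (left_mem_segment ℝ x y))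

theorem sub_mem_dotOrthogonal_iff :
    y - x₀ ∈ dotOrthogonal (vectorSpan ℝ (cellAt n I a x₀)) ↔
      ∀ i ∈ maximizers I a x₀, ∀ j ∈ maximizers I a x₀, tvalN n a i y = tvalN n a j y := by
  rw [vectorSpan_cellAt, mem_dotOrthogonal_vectorSpan_iff, Set.forall_mem_image]
  refine forall₂_congr fun i hi => ?_
  rw [Set.forall_mem_image]
  refine forall₂_congr fun j hj => ?_
  have hx₀ := tvalN_eq_of_mem_maximizers (a := a) hi hj
  simp only [dotProduct_sub, tvalN_eq] at hx₀ ⊢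
  constructor <;> intro h <;> linarith

/-- `V^Λ` is an open subset of the affine subspace through `x₀` orthogonal to `Λ`. -/
theorem vectorSpan_dualSupport_cellAt (hI : I.Nonempty) (x₀ : Fin n → ℝ) :
    vectorSpan ℝ (dualSupport n I a (cellAt n I a x₀)) =
      dotOrthogonal (vectorSpan ℝ (cellAt n I a x₀)) := by
  set A := AffineSubspace.mk' x₀ (dotOrthogonal (vectorSpan ℝ (cellAt n I a x₀)))
  have hA : ∀ y, y ∈ A ↔
      ∀ i ∈ maximizers I a x₀, ∀ j ∈ maximizers I a x₀, tvalN n a i y = tvalN n a j y :=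
    fun y => by rw [AffineSubspace.mem_mk', vsub_eq_sub, sub_mem_dotOrthogonal_iff]
  rw [← AffineSubspace.direction_mk' x₀ (dotOrthogonal _)]
  refine vectorSpan_eq_direction_of_eventually (fun y hy => ?_) (AffineSubspace.self_mem_mk' _ _) ?_
  · rw [mem_dualSupport_cellAt] at hy
    rw [SetLike.mem_coe, hA, ← hy]
    exact fun i hi j hj => tvalN_eq_of_mem_maximizers hi hj
  · filter_upwards [eventually_maximizers_subset x₀] with y hsub hyA
    rw [mem_dualSupport_cellAt]
    obtain ⟨m, hm⟩ := maximizers_nonempty (a := a) hI y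
    exact subset_antisymm hsub fun i hi =>
      mem_argmaxOn_of_le hm (maximizers_subset hi) ((hA y).1 hyA m (hsub hm) i hi).le

theorem dimA_cellAt_add_dimA_dualSupport (hI : I.Nonempty) (x₀ : Fin n → ℝ) :
    dimA (cellAt n I a x₀) + dimA (dualSupport n I a (cellAt n I a x₀)) = n := by
  rw [dimA, dimA, vectorSpan_dualSupport_cellAt hI, finrank_add_finrank_dotOrthogonal,
    Fintype.card_fin]

theorem isOpen_setOf_maximizers_eq_singleton (hI : I.Nonempty) (i : Fin n → ℕ) :
    IsOpen {x | maximizers I a x = {i}} := by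
  refine isOpen_iff_mem_nhds.2 fun x hx => ?_
  filter_upwards [eventually_maximizers_subset x] with y hy
  exact (Finset.subset_singleton_iff.1 (hx ▸ hy)).resolve_left (maximizers_nonempty hI y).ne_empty

theorem iUnion_setOf_maximizers_eq_singleton (hI : I.Nonempty) :
    ⋃ i, {x | maximizers I a x = {i}} = (closure (tropSetN n I a))ᶜ := by
  ext x
  rw [Set.mem_iUnion]
  constructor
  · rintro ⟨i, hx⟩
    have hdisj : Disjoint {x | maximizers I a x = {i}} (tropSetN n I a) :=
      Set.disjoint_left.2 fun y (hy : maximizers I a y = {i}) hyT => by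
        rw [mem_tropSetN_iff_nontrivial, hy] at hyT
        exact Finset.not_nontrivial_singleton hyT
    exact Set.disjoint_left.1 (hdisj.closure_right (isOpen_setOf_maximizers_eq_singleton hI i)) hx
  · intro hx
    refine ((maximizers_nonempty hI x).exists_eq_singleton_or_nontrivial).resolve_right ?_
    rw [← mem_tropSetN_iff_nontrivial]
    exact fun hxT => hx (subset_closure hxT)

theorem dualSupport_cellAt_eq_connectedComponentIn (hI : I.Nonempty)
    (h₀ : dimA (cellAt n I a x₀) = 0) (hx : x ∈ dualSupport n I a (cellAt n I a x₀)) :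
    dualSupport n I a (cellAt n I a x₀) = connectedComponentIn (closure (tropSetN n I a))ᶜ x := by
  obtain ⟨i, hi⟩ := (maximizers_nonempty hI x₀).exists_eq_singleton_or_nontrivial.resolve_right
    (dimA_cellAt_eq_zero_iff.1 h₀)
  have hV : dualSupport n I a (cellAt n I a x₀) = {y | maximizers I a y = {i}} := by
    ext y
    rw [mem_dualSupport_cellAt, hi, Set.mem_ofPred_eq]
  rw [hV] at hx ⊢
  refine (connectedComponentIn_eq_of_iUnion_eq (iUnion_setOf_maximizers_eq_singleton hI)
    (isOpen_setOf_maximizers_eq_singleton hI)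
    (fun j => (convex_setOf_maximizers_eq (Finset.singleton_nonempty j)).isPreconnected)
    (fun j k hjk => Set.disjoint_left.2 fun y hj hk => hjk ?_) hx).symm
  exact Finset.singleton_injective (hj.symm.trans hk)

theorem maximizers_add_smul (hI : I.Nonempty) {u : Fin n → ℝ}
    (hu : ∀ l ∈ I, ∀ m ∈ maximizers I a x, toReal l ⬝ᵥ u ≤ toReal m ⬝ᵥ u) {t : ℝ} (ht : 0 ≤ t) :
    maximizers I a (x + t • u) = maximizers I a x := by
  have hsplit : (fun i => tvalN n a i (x + t • u)) =
      (fun i => tvalN n a i x) + fun i => t * (toReal i ⬝ᵥ u) :=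
    funext fun i => tvalN_add_smul i x u t
  rw [maximizers, hsplit]
  exact argmaxOn_add_of_subset (fun m hm => mem_argmaxOn.2 ⟨argmaxOn_subset hm,
    fun l hl => mul_le_mul_of_nonneg_left (hu l hl m hm) ht⟩) (argmaxOn_nonempty hI)

theorem not_isBounded_dualSupport_cellAt_iff (hI : I.Nonempty) (x₀ : Fin n → ℝ) :
    ¬ IsBounded (dualSupport n I a (cellAt n I a x₀)) ↔
      ∃ u ≠ 0, ∀ l ∈ I, ∀ m ∈ maximizers I a x₀, toReal l ⬝ᵥ u ≤ toReal m ⬝ᵥ u := by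
  constructor
  · intro h
    obtain ⟨u, hu, hle⟩ := exists_ne_zero_forall_dotProduct_nonpos_of_not_isBounded h
      (κ := I × maximizers I a x₀) (v := fun k => toReal k.1.1 - toReal k.2.1)
      (c := fun k => a k.2.1 - a k.1.1) fun x hx ⟨⟨l, hl⟩, ⟨m, hm⟩⟩ => by
        rw [mem_dualSupport_cellAt] at hx
        have hlm := (mem_maximizers.1 (hx ▸ hm)).2 l hl
        simp only [tvalN_eq, sub_dotProduct] at hlm ⊢
        linarith
    exact ⟨u, hu, fun l hl m hm => by simpa [sub_dotProduct] using hle (⟨l, hl⟩, ⟨m, hm⟩)⟩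
  · rintro ⟨u, hu, hle⟩
    exact not_isBounded_of_forall_add_smul_mem hu fun t ht =>
      mem_dualSupport_cellAt.2 (maximizers_add_smul hI hle ht)

theorem cellAt_subset_frontier_iff (hI : I.Nonempty) (x₀ : Fin n → ℝ) :
    cellAt n I a x₀ ⊆ frontier (convexHull ℝ (toReal '' (I : Set (Fin n → ℕ)))) ↔
      ∃ u ≠ 0, ∀ l ∈ I, ∀ m ∈ maximizers I a x₀, toReal l ⬝ᵥ u ≤ toReal m ⬝ᵥ u := by
  rw [cellAt_eq_convexHull, convexHull_subset_frontier_convexHull_iff (I.finite_toSet.image _)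
    (Set.image_mono (Finset.coe_subset.2 maximizers_subset))
    ((maximizers_nonempty hI x₀).to_set.image _)]
  simp only [Set.forall_mem_image]
  rfl

end Cells

end TropicalDual

open TropicalDual

/-- **duality between `𝒯(f)` and `Subdiv(Δ)`.**
Let `f` be a tropical polynomial in `n` variables with support `I`, Newton polytope
`Δ = conv(I)` and induced regular subdivision `Subdiv(Δ)` (whose cells are exactly the
convex hulls `cellAt x` of the sets of monomials attaining the maximum at the points
`x ∈ ℝⁿ`).  Then `Λ ↦ V^Λ = {x | cellAt x = Λ}` is a bijection from the cells of
`Subdiv(Δ)` onto the cells of `𝒯(f)` together with the connected components of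
`ℝⁿ ∖ closure 𝒯(f)`, such that:
* a `k`-dimensional cell `Λ` corresponds to a cell `V^Λ` of dimension `n − k` whose affine
  span is orthogonal to that of `Λ`; for `k = 0`, `V^Λ` is a connected component of
  `ℝⁿ ∖ closure 𝒯(f)`;
* `Λ₁ ≠ Λ₂` implies `V^{Λ₁} ∩ V^{Λ₂} = ∅`;
* `Λ₁ ⊆ closure Λ₂` implies `V^{Λ₂} ⊆ closure V^{Λ₁}`;
* `𝒯(f)` is the (disjoint) union of the `V^Λ` over the cells `Λ` of positive dimension;
* `V^Λ` is unbounded iff `Λ ⊆ ∂Δ`. -/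
theorem tropical_dual_subdivision
    (n : ℕ) (I : Finset (Fin n → ℕ)) (hI : I.Nonempty) (a : (Fin n → ℕ) → ℝ) :
    -- the assignment Λ ↦ V^Λ is injective on the cells of Subdiv(Δ)
    (∀ Λ₁ Λ₂ : Set (Fin n → ℝ), (∃ x, cellAt n I a x = Λ₁) → (∃ x, cellAt n I a x = Λ₂) →
        dualSupport n I a Λ₁ = dualSupport n I a Λ₂ → Λ₁ = Λ₂) ∧
    -- dimension complementarity and orthogonality
    (∀ Λ : Set (Fin n → ℝ), (∃ x, cellAt n I a x = Λ) →
        dimA Λ + dimA (dualSupport n I a Λ) = n ∧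
        ∀ u ∈ vectorSpan ℝ (dualSupport n I a Λ), ∀ z ∈ vectorSpan ℝ Λ,
          (∑ j, u j * z j) = 0) ∧
    -- 0-dimensional cells correspond to the connected components of the complement
    (∀ Λ : Set (Fin n → ℝ), (∃ x, cellAt n I a x = Λ) → dimA Λ = 0 →
        ∀ x ∈ dualSupport n I a Λ,
          dualSupport n I a Λ = connectedComponentIn (closure (tropSetN n I a))ᶜ x) ∧
    -- distinct cells have disjoint duals
    (∀ Λ₁ Λ₂ : Set (Fin n → ℝ), Λ₁ ≠ Λ₂ →
        dualSupport n I a Λ₁ ∩ dualSupport n I a Λ₂ = ∅) ∧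
    -- inclusion of cells reverses into inclusion of closures of dual cells
    (∀ Λ₁ Λ₂ : Set (Fin n → ℝ), (∃ x, cellAt n I a x = Λ₁) → (∃ x, cellAt n I a x = Λ₂) →
        Λ₁ ⊆ closure Λ₂ → dualSupport n I a Λ₂ ⊆ closure (dualSupport n I a Λ₁)) ∧
    -- 𝒯(f) is the disjoint union of the V^Λ over positive-dimensional Λ
    (tropSetN n I a =
      ⋃₀ {V | ∃ Λ : Set (Fin n → ℝ), (∃ x, cellAt n I a x = Λ) ∧ 1 ≤ dimA Λ ∧
        V = dualSupport n I a Λ}) ∧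
    -- V^Λ is unbounded iff Λ lies in the boundary of the Newton polytope
    (∀ Λ : Set (Fin n → ℝ), (∃ x, cellAt n I a x = Λ) →
        (¬ Bornology.IsBounded (dualSupport n I a Λ) ↔
          Λ ⊆ frontier (convexHull ℝ
            ((fun (i : Fin n → ℕ) (j : Fin n) => (i j : ℝ)) '' (I : Set (Fin n → ℕ)))))) := by
  refine ⟨?_, ?_, ?_, ?_, ?_, ?_, ?_⟩
  · rintro Λ₁ Λ₂ ⟨x₁, rfl⟩ - hV
    exact (hV ▸ rfl : x₁ ∈ dualSupport n I a Λ₂)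
  · rintro Λ ⟨x₀, rfl⟩
    refine ⟨dimA_cellAt_add_dimA_dualSupport hI x₀, fun u hu z hz => ?_⟩
    rw [vectorSpan_dualSupport_cellAt hI] at hu
    exact (dotProduct_comm u z).trans (mem_dotOrthogonal.1 hu z hz)
  · rintro Λ ⟨x₀, rfl⟩ h₀ x hx
    exact dualSupport_cellAt_eq_connectedComponentIn hI h₀ hx
  · exact fun Λ₁ Λ₂ hne => Set.eq_empty_of_forall_notMem fun x hx => hne (hx.1.symm.trans hx.2)
  · rintro Λ₁ Λ₂ ⟨y, rfl⟩ ⟨x₂, rfl⟩ hsub x hx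
    refine mem_closure_dualSupport_cellAt hI (cellAt_subset_cellAt_iff.1 ?_)
    rw [show cellAt n I a x = cellAt n I a x₂ from hx]
    exact hsub.trans (isClosed_cellAt x₂).closure_subset
  · ext x
    rw [mem_tropSetN_iff_dimA_ne_zero]
    constructor
    · exact fun hx => ⟨_, ⟨_, ⟨x, rfl⟩, Nat.one_le_iff_ne_zero.2 hx, rfl⟩, rfl⟩
    · rintro ⟨_, ⟨Λ, -, hdim, rfl⟩, hx⟩
      rw [show cellAt n I a x = Λ from hx]
      omega
  · rintro Λ ⟨x₀, rfl⟩
    exact (not_isBounded_dualSupport_cellAt_iff hI x₀).trans (cellAt_subset_frontier_iff hI x₀).symm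
end
end

section
/- Let f, g be tropical polynomials in two variables with Newton polygons Δ_f, Δ_g and induced regular subdivisions Subdiv(Δ_f), Subdiv(Δ_g). Then the Newton polygon of "fg" is the Minkowski sum Δ_{fg} = Δ_f + Δ_g, and every cell of the regular subdivision of Δ_{fg} induced by "fg" is the Minkowski sum u + v of a cell u of Subdiv(Δ_f) and a cell v of Subdiv(Δ_g); namely, for a point q, the cell of Subdiv(Δ_{fg}) dual to the cell containing q is the Minkowski sum of the convex hulls of the sets of monomials of f and of g attaining the maximum at q. -/
noncomputable section
open scoped Classical Pointwise
open MeasureTheory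

/-- The value of the monomial of exponent `i` of the (max-plus) tropical polynomial with
coefficients `a` at the point `x ∈ ℝ²`. -/
def tval (a : ℕ × ℕ → ℝ) (i : ℕ × ℕ) (x : ℝ × ℝ) : ℝ :=
  a i + i.1 * x.1 + i.2 * x.2

/-- The tropical plane curve defined by the tropical polynomial with support `I` and
coefficients `a`: the set of points where the maximum `max_{i ∈ I} (a_i + i·x)` is attained
for at least two different indices. -/
def tropCurve (I : Finset (ℕ × ℕ)) (a : ℕ × ℕ → ℝ) : Set (ℝ × ℝ) :=
  {x | ∃ i ∈ I, ∃ j ∈ I, i ≠ j ∧ tval a i x = tval a j x ∧ ∀ l ∈ I, tval a l x ≤ tval a i x}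

/-- The set of monomials of the tropical polynomial `(I, a)` attaining the maximum at `x`. -/
def argmaxSet (I : Finset (ℕ × ℕ)) (a : ℕ × ℕ → ℝ) (x : ℝ × ℝ) : Finset (ℕ × ℕ) :=
  I.filter fun i => ∀ l ∈ I, tval a l x ≤ tval a i x

def toR2 (i : ℕ × ℕ) : ℝ × ℝ := ((i.1 : ℝ), (i.2 : ℝ))

/-- The cell of the regular subdivision of the Newton polygon dual to the cell of the
tropical curve containing `x`: the convex hull of the monomials attaining the maximum at `x`. -/
def dualCell (I : Finset (ℕ × ℕ)) (a : ℕ × ℕ → ℝ) (x : ℝ × ℝ) : Set (ℝ × ℝ) :=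
  convexHull ℝ (toR2 '' (argmaxSet I a x : Set (ℕ × ℕ)))

/-- The Newton polygon of a support set `I ⊆ ℤ²`. -/
def newtonPolygon (I : Finset (ℕ × ℕ)) : Set (ℝ × ℝ) :=
  convexHull ℝ (toR2 '' (I : Set (ℕ × ℕ)))

/-- Euclidean area of a subset of the plane. -/
def vol2 (S : Set (ℝ × ℝ)) : ℝ := (volume S).toReal

/-- The mixed volume `ℳ(A,B) = vol(A+B) − vol(A) − vol(B)` of two (convex) sets in the
plane; `+` is the Minkowski sum. -/
def mixedVol (A B : Set (ℝ × ℝ)) : ℝ := vol2 (A + B) - vol2 A - vol2 B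

/-- The tropical intersection multiplicity of a point `q` for the curves of `(If, af)` and
`(Ig, ag)`: the mixed volume of the two cells of the dual subdivisions corresponding to the
cells of the curves containing `q` (these dual cells are the Newton polygons of the residual
polynomials over `q`). -/
def tropMult (If : Finset (ℕ × ℕ)) (af : ℕ × ℕ → ℝ) (Ig : Finset (ℕ × ℕ)) (ag : ℕ × ℕ → ℝ)
    (q : ℝ × ℝ) : ℝ :=
  mixedVol (dualCell If af q) (dualCell Ig ag q)

def translateSet (C : Set (ℝ × ℝ)) (u : ℝ × ℝ) : Set (ℝ × ℝ) := (· + u) '' C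

/-- The stable intersection of two tropical plane curves: the limit set, as `u, w → 0`, of the
intersection points of small generic translates `C_f + u`, `C_g + w` whose intersection is
finite.  A point `q` is in the stable intersection iff arbitrarily close to it there are
intersection points of translates by arbitrarily small vectors with finite intersection. -/
def stableInter (Cf Cg : Set (ℝ × ℝ)) : Set (ℝ × ℝ) :=
  {q | ∀ ε > 0, ∃ u w : ℝ × ℝ, ‖u‖ < ε ∧ ‖w‖ < ε ∧
    (translateSet Cf u ∩ translateSet Cg w).Finite ∧
    ∃ p ∈ translateSet Cf u ∩ translateSet Cg w, dist p q < ε}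

/-- The coefficient of the monomial `k` in the tropical product `"fg"` of the tropical
polynomials `(If, af)` and `(Ig, ag)`: the maximum of `a_i + b_j` over the decompositions
`k = i + j`.  (The support of the product is the Minkowski sum `If + Ig`.) -/
def prodCoeff (If Ig : Finset (ℕ × ℕ)) (af ag : ℕ × ℕ → ℝ) (k : ℕ × ℕ) : ℝ :=
  if h : ((If ×ˢ Ig).filter fun p => p.1 + p.2 = k).Nonempty then
    ((If ×ˢ Ig).filter fun p => p.1 + p.2 = k).sup' h fun p => af p.1 + ag p.2
  else 0

/-! The maximum of a sup-convolution `h(k) = max_{i + j = k} (f i + g j)` over `s + t` is attained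
exactly at the sums of a maximiser of `f` over `s` and one of `g` over `t`. The value
`tval (prodCoeff …) k x` of the product is such a sup-convolution of the values of the factors,
so the monomials of `"fg"` attaining the maximum at `q` are the Minkowski sum of those of `f`
and `g`; taking convex hulls, which commute with Minkowski sums and with the additive embedding
`ℕ² → ℝ²`, gives both statements. -/

theorem Finset.filter_isMax_of_supConvolution {M : Type*} [Add M] [DecidableEq M] (s t : Finset M)
    (f g h : M → ℝ) (le_h : ∀ i ∈ s, ∀ j ∈ t, f i + g j ≤ h (i + j))
    (h_attained : ∀ k ∈ s + t, ∃ i ∈ s, ∃ j ∈ t, i + j = k ∧ h k = f i + g j) :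
    (s + t).filter (fun k => ∀ l ∈ s + t, h l ≤ h k) =
      s.filter (fun i => ∀ l ∈ s, f l ≤ f i) + t.filter (fun j => ∀ l ∈ t, g l ≤ g j) := by
  ext k
  simp only [Finset.mem_filter]
  constructor
  · rintro ⟨hk, hmax⟩
    obtain ⟨i, hi, j, hj, rfl, hij⟩ := h_attained k hk
    refine Finset.mem_add.2 ⟨i, Finset.mem_filter.2 ⟨hi, fun l hl => ?_⟩,
      j, Finset.mem_filter.2 ⟨hj, fun l hl => ?_⟩, rfl⟩
    · linarith [le_h l hl j hj, hmax (l + j) (Finset.add_mem_add hl hj)]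
    · linarith [le_h i hi l hl, hmax (i + l) (Finset.add_mem_add hi hl)]
  · intro hk
    obtain ⟨i, hi', j, hj', rfl⟩ := Finset.mem_add.1 hk
    obtain ⟨hi, hi_max⟩ := Finset.mem_filter.1 hi'
    obtain ⟨hj, hj_max⟩ := Finset.mem_filter.1 hj'
    refine ⟨Finset.add_mem_add hi hj, fun l hl => ?_⟩
    obtain ⟨i', hi', j', hj', rfl, hl_eq⟩ := h_attained l hl
    linarith [hi_max i' hi', hj_max j' hj', le_h i hi j hj]

section TropicalProduct

variable (If Ig : Finset (ℕ × ℕ)) (af ag : ℕ × ℕ → ℝ)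

theorem tval_add_index (c a b : ℕ × ℕ → ℝ) (i j : ℕ × ℕ) (x : ℝ × ℝ) :
    tval c (i + j) x = tval a i x + tval b j x + (c (i + j) - (a i + b j)) := by
  simp only [tval, Prod.fst_add, Prod.snd_add, Nat.cast_add]
  ring

theorem le_prodCoeff {i j : ℕ × ℕ} (hi : i ∈ If) (hj : j ∈ Ig) :
    af i + ag j ≤ prodCoeff If Ig af ag (i + j) := by
  have hmem : (i, j) ∈ (If ×ˢ Ig).filter fun p => p.1 + p.2 = i + j := by
    simp [hi, hj]
  rw [prodCoeff, dif_pos ⟨_, hmem⟩]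
  exact Finset.le_sup' (fun p => af p.1 + ag p.2) hmem

theorem exists_prodCoeff_eq {k : ℕ × ℕ} (hk : k ∈ If + Ig) :
    ∃ i ∈ If, ∃ j ∈ Ig, i + j = k ∧ prodCoeff If Ig af ag k = af i + ag j := by
  obtain ⟨i, hi, j, hj, rfl⟩ := Finset.mem_add.1 hk
  have hne : ((If ×ˢ Ig).filter fun p => p.1 + p.2 = i + j).Nonempty :=
    ⟨(i, j), by simp [hi, hj]⟩
  obtain ⟨p, hp, hsup⟩ := Finset.exists_mem_eq_sup' hne fun p => af p.1 + ag p.2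
  simp only [Finset.mem_filter, Finset.mem_product] at hp
  exact ⟨p.1, hp.1.1, p.2, hp.1.2, hp.2, by rw [prodCoeff, dif_pos hne, hsup]⟩

theorem argmaxSet_prodCoeff (x : ℝ × ℝ) :
    argmaxSet (If + Ig) (prodCoeff If Ig af ag) x = argmaxSet If af x + argmaxSet Ig ag x := by
  refine Finset.filter_isMax_of_supConvolution If Ig (tval af · x) (tval ag · x)
    (tval (prodCoeff If Ig af ag) · x) (fun i hi j hj => ?_) fun k hk => ?_
  · linarith [tval_add_index (prodCoeff If Ig af ag) af ag i j x, le_prodCoeff If Ig af ag hi hj]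
  · obtain ⟨i, hi, j, hj, rfl, hk_eq⟩ := exists_prodCoeff_eq If Ig af ag hk
    refine ⟨i, hi, j, hj, rfl, ?_⟩
    rw [tval_add_index (prodCoeff If Ig af ag) af ag i j x, hk_eq]
    ring

end TropicalProduct

def toR2AddHom : ℕ × ℕ →+ ℝ × ℝ :=
  (Nat.castAddMonoidHom ℝ).prodMap (Nat.castAddMonoidHom ℝ)

theorem convexHull_toR2_image_add (A B : Set (ℕ × ℕ)) :
    convexHull ℝ (toR2 '' (A + B)) = convexHull ℝ (toR2 '' A) + convexHull ℝ (toR2 '' B) := by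
  rw [← convexHull_add]
  exact congrArg (convexHull ℝ) (Set.image_add toR2AddHom)

theorem newton_and_subdivision_of_product_general
    (If Ig : Finset (ℕ × ℕ))
    (af ag : ℕ × ℕ → ℝ) :
    newtonPolygon (If + Ig) = newtonPolygon If + newtonPolygon Ig ∧
    ∀ q : ℝ × ℝ,
      dualCell (If + Ig) (prodCoeff If Ig af ag) q = dualCell If af q + dualCell Ig ag q := by
  refine ⟨?_, fun q => ?_⟩
  · rw [newtonPolygon, Finset.coe_add, convexHull_toR2_image_add]
    rfl
  · rw [dualCell, argmaxSet_prodCoeff, Finset.coe_add, convexHull_toR2_image_add]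
    rfl

/-- The Newton polygon of the tropical product `"fg"` is the Minkowski sum
of the Newton polygons of `f` and of `g`, and the regular subdivision of `Δ_{fg}` induced by
`"fg"` is the mixed subdivision: for every point `q`, the cell of `Subdiv(Δ_{fg})` dual to the
cell containing `q` (the convex hull of the monomials of `"fg"` attaining the maximum at `q`)
is the Minkowski sum of the corresponding dual cells of `Subdiv(Δ_f)` and `Subdiv(Δ_g)`
(the convex hulls of the monomials of `f`, resp. `g`, attaining the maximum at `q`). -/
theorem newton_and_subdivision_of_product
    (If Ig : Finset (ℕ × ℕ)) (hIf : If.Nonempty) (hIg : Ig.Nonempty)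
    (af ag : ℕ × ℕ → ℝ) :
    newtonPolygon (If + Ig) = newtonPolygon If + newtonPolygon Ig ∧
    ∀ q : ℝ × ℝ,
      dualCell (If + Ig) (prodCoeff If Ig af ag) q = dualCell If af q + dualCell Ig ag q :=
  newton_and_subdivision_of_product_general If Ig af ag
end
end

section
/- Let P(a_i, b_j) be a polynomial over 𝕂 that is homogeneous in the set of variables (a_i)_{i∈I} and homogeneous in the set of variables (b_j)_{j∈J} (for instance the resultant R(I,J,𝕂)). Substitute each a_i by f̃_i = Σ_{k=o_i}^{n_i} A_{ik}t^{−ν_{ik}}y^k and each b_j by g̃_j = Σ_{q=r_j}^{m_j} B_{jq}t^{−η_{jq}}y^q, where the A_{ik}, B_{jq} are independent indeterminates. Then no cancellation of terms occurs: two distinct monomials T₁ ≠ T₂ of P give rise, after substitution and expansion, to disjoint sets of monomials in the variables A_{ik}, B_{jq}, y. Consequently, when the residue field has characteristic zero, the tropicalization of P(f̃_i, g̃_j) equals the evaluation of the tropicalization of P at the tropicalizations of the f̃_i, g̃_j. -/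
/-!
Each indeterminate `A_{ik}` (resp. `B_{jq}`) remembers the variable `a_i` (resp. `b_j`) it
replaces. Grading by these tags, the image of the monomial `a^α b^β` is homogeneous of
multidegree `(α, β)`, so images of distinct monomials have disjoint supports.

Each `f̃_i`, `g̃_j` arises from a polynomial with coefficients in `ℕ` by rescaling the variables,
and this property survives products. Hence every coefficient of a product is a sum of terms
`n • c` with one common `c`; when nonzero integers have valuation `0` its valuation is the minimum
of the valuations of the terms, which makes tropicalization multiplicative on such polynomials.
Tropicalization is additive on sums with disjoint supports, which the first part provides.
-/

noncomputable section
open scoped Classical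

/-- A nontrivial rank-one valuation `v : K → Γ ∪ {∞}` on a field `K` (written additively,
with `v 0 = ⊤` and value group containing `ℚ`).  The tropicalization map is `T(x) = −v(x)`. -/
structure Val (K : Type) [Field K] : Type where
  /-- the valuation -/
  v : K → WithTop ℝ
  v_eq_top : ∀ x : K, v x = ⊤ ↔ x = 0
  v_mul : ∀ x y : K, v (x * y) = v x + v y
  v_add : ∀ x y : K, min (v x) (v y) ≤ v (x + y)
  /-- the value group contains `ℚ` (in particular the valuation is nontrivial) -/
  v_rat : ∀ q : ℚ, ∃ x : K, v x = ((q : ℝ) : WithTop ℝ)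

abbrev TR := Tropical (WithTop ℝ)

/-- Coefficientwise tropicalization of a multivariate polynomial over a valued field. -/
def tropMv {K : Type} [Field K] {σ : Type} (v : K → WithTop ℝ) (p : MvPolynomial σ K) :
    MvPolynomial σ TR :=
  ∑ m ∈ p.support, MvPolynomial.monomial m (Tropical.trop (v (p.coeff m)))

/-- The substitution `a_i ↦ f̃_i = Σ_{k ∈ SF i} A_{ik} t^{−ν_{ik}} y^k`,
`b_j ↦ g̃_j = Σ_{q ∈ SG j} B_{jq} t^{−η_{jq}} y^q`, where the `A_{ik}`, `B_{jq}` are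
independent indeterminates (the variables `Sum.inl (Sum.inl (i,k))`,
`Sum.inl (Sum.inr (j,q))` of the target ring), `y` is the variable `Sum.inr ()`, and
`tcF (i,k) = t^{−ν_{ik}}`, `tcG (j,q) = t^{−η_{jq}}` are the given scalars. -/
def subsAlg {K : Type} [Field K] (SF SG : ℕ → Finset ℕ) (tcF tcG : ℕ × ℕ → K) :
    (ℕ ⊕ ℕ) → MvPolynomial (((ℕ × ℕ) ⊕ (ℕ × ℕ)) ⊕ Unit) K :=
  Sum.elim
    (fun i => ∑ k ∈ SF i, MvPolynomial.C (tcF (i, k)) *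
      MvPolynomial.X (Sum.inl (Sum.inl (i, k))) * MvPolynomial.X (Sum.inr ()) ^ k)
    (fun j => ∑ q ∈ SG j, MvPolynomial.C (tcG (j, q)) *
      MvPolynomial.X (Sum.inl (Sum.inr (j, q))) * MvPolynomial.X (Sum.inr ()) ^ q)

open MvPolynomial Finset.HasAntidiagonal

section NoCancellation

variable {R : Type*} [CommSemiring R] {M : Type*} [AddCommMonoid M] {σ τ : Type*} {wt : τ → M}
  {φ : σ → MvPolynomial τ R} {d : σ → M}

theorem isWeightedHomogeneous_aeval_monomial (hφ : ∀ s, (φ s).IsWeightedHomogeneous wt (d s))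
    (m : σ →₀ ℕ) (c : R) :
    (aeval φ (monomial m c)).IsWeightedHomogeneous wt (Finsupp.weight d m) := by
  rw [aeval_monomial, algebraMap_eq, Finsupp.weight_apply]
  exact (IsWeightedHomogeneous.prod _ _ _ fun s _ => (hφ s).pow (m s)).C_mul c

theorem disjoint_support_aeval_monomial (hφ : ∀ s, (φ s).IsWeightedHomogeneous wt (d s))
    {m₁ m₂ : σ →₀ ℕ} (h : Finsupp.weight d m₁ ≠ Finsupp.weight d m₂) (c₁ c₂ : R) :
    Disjoint (aeval φ (monomial m₁ c₁)).support (aeval φ (monomial m₂ c₂)).support :=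
  Finset.disjoint_left.2 fun _ h₁ h₂ =>
    h ((isWeightedHomogeneous_aeval_monomial hφ m₁ c₁ (mem_support_iff.1 h₁)).symm.trans
      (isWeightedHomogeneous_aeval_monomial hφ m₂ c₂ (mem_support_iff.1 h₂)))

end NoCancellation

namespace Val

variable {K : Type} [Field K] (V : Val K)

theorem v_zero : V.v 0 = ⊤ := (V.v_eq_top 0).2 rfl

theorem v_one : V.v 1 = 0 := by
  have hne : V.v 1 ≠ ⊤ := fun h => one_ne_zero ((V.v_eq_top 1).1 h)
  have hmul := V.v_mul 1 1
  rw [mul_one] at hmul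
  lift V.v 1 to ℝ using hne with r
  have : r = r + r := by exact_mod_cast hmul
  norm_cast
  linarith

variable {V}

theorem v_natCast_mul (hv : ∀ n : ℕ, n ≠ 0 → V.v (n : K) = 0) (n : ℕ) (c : K) :
    V.v (n * c) = if n = 0 then ⊤ else V.v c := by
  split_ifs with hn
  · rw [hn, Nat.cast_zero, zero_mul, V.v_zero]
  · rw [V.v_mul, hv n hn, zero_add]

theorem v_sum_natCast_mul (hv : ∀ n : ℕ, n ≠ 0 → V.v (n : K) = 0) {ι : Type*}
    (s : Finset ι) (n : ι → ℕ) (c : K) :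
    V.v (∑ i ∈ s, (n i : K) * c) = s.inf fun i => V.v (n i * c) := by
  simp only [← Finset.sum_mul, ← Nat.cast_sum, v_natCast_mul hv]
  split_ifs with h
  · rw [Finset.sum_eq_zero_iff] at h
    exact ((Finset.inf_eq_top_iff _ _).2 fun i hi => if_pos (h i hi)).symm
  · obtain ⟨i, hi, hni⟩ := Finset.exists_ne_zero_of_sum_ne_zero h
    refine le_antisymm (Finset.le_inf fun j _ => ?_) ((Finset.inf_le hi).trans_eq (if_neg hni))
    split_ifs
    exacts [le_top, le_rfl]

end Val

section Tropicalization

variable {K : Type} [Field K] (V : Val K) {σ : Type}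

theorem coeff_tropMv (p : MvPolynomial σ K) (μ : σ →₀ ℕ) :
    (tropMv V.v p).coeff μ = Tropical.trop (V.v (p.coeff μ)) := by
  rw [tropMv, coeff_sum]
  simp only [coeff_monomial, Finset.sum_ite_eq', mem_support_iff, ite_not]
  split_ifs with h
  · rw [h, V.v_zero, Tropical.trop_top]
  · rfl

theorem tropMv_one : tropMv V.v (1 : MvPolynomial σ K) = 1 := by
  ext μ
  rw [coeff_tropMv, coeff_one, coeff_one]
  split_ifs
  · rw [V.v_one]; rfl
  · rw [V.v_zero, Tropical.trop_top]

theorem tropMv_C_mul (c : K) (p : MvPolynomial σ K) :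
    tropMv V.v (C c * p) = C (Tropical.trop (V.v c)) * tropMv V.v p := by
  ext μ
  rw [coeff_tropMv, coeff_C_mul, coeff_C_mul, coeff_tropMv, V.v_mul, Tropical.trop_add]

theorem tropMv_add_of_disjoint {p q : MvPolynomial σ K} (h : Disjoint p.support q.support) :
    tropMv V.v (p + q) = tropMv V.v p + tropMv V.v q := by
  ext μ
  rw [coeff_add, coeff_tropMv, coeff_tropMv, coeff_tropMv, coeff_add]
  by_cases hp : μ ∈ p.support
  · rw [notMem_support_iff.1 (Finset.disjoint_left.1 h hp), add_zero, V.v_zero,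
      Tropical.trop_top, add_zero]
  · rw [notMem_support_iff.1 hp, zero_add, V.v_zero, Tropical.trop_top, zero_add]

theorem tropMv_sum_of_pairwise_disjoint {ι : Type*} (s : Finset ι) (p : ι → MvPolynomial σ K)
    (h : ∀ i ∈ s, ∀ j ∈ s, i ≠ j → Disjoint (p i).support (p j).support) :
    tropMv V.v (∑ i ∈ s, p i) = ∑ i ∈ s, tropMv V.v (p i) := by
  induction s using Finset.cons_induction with
  | empty => simp [tropMv]
  | cons a s ha ih =>
    have hdisj : Disjoint (p a).support (∑ i ∈ s, p i).support := by
      refine Finset.disjoint_of_subset_right support_sum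
        ((Finset.disjoint_biUnion_right _ _ _).2 fun i hi => ?_)
      exact h a (s.mem_cons_self a) i (Finset.mem_cons_of_mem hi)
        (ne_of_mem_of_not_mem hi ha).symm
    rw [Finset.sum_cons, Finset.sum_cons, tropMv_add_of_disjoint V hdisj,
      ih fun i hi j hj => h i (Finset.mem_cons_of_mem hi) j (Finset.mem_cons_of_mem hj)]

end Tropicalization

section NatScaled

variable {R : Type*} [CommSemiring R] {τ : Type*} (w : τ → R)

theorem coeff_mul_coeff_of_mem_antidiagonal {f g : MvPolynomial τ R} {nf ng : (τ →₀ ℕ) → ℕ}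
    (hf : ∀ μ, f.coeff μ = nf μ * μ.prod fun e k => w e ^ k)
    (hg : ∀ μ, g.coeff μ = ng μ * μ.prod fun e k => w e ^ k)
    {μ : τ →₀ ℕ} {x : (τ →₀ ℕ) × (τ →₀ ℕ)} (hx : x ∈ antidiagonal μ) :
    f.coeff x.1 * g.coeff x.2 = ((nf x.1 * ng x.2 : ℕ) : R) * μ.prod fun e k => w e ^ k := by
  rw [hf, hg, ← mem_antidiagonal.1 hx,
    Finsupp.prod_add_index' (fun _ => pow_zero _) fun _ _ _ => pow_add _ _ _]
  push_cast
  ring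

/-- The polynomials arising from polynomials with coefficients in `ℕ` by the rescaling
`X e ↦ w e • X e`. -/
def natScaled : Subsemiring (MvPolynomial τ R) where
  carrier := {f | ∀ μ, ∃ n : ℕ, f.coeff μ = n * μ.prod fun e k => w e ^ k}
  zero_mem' _ := ⟨0, by simp⟩
  add_mem' {f g} hf hg μ := by
    obtain ⟨nf, hnf⟩ := hf μ
    obtain ⟨ng, hng⟩ := hg μ
    exact ⟨nf + ng, by rw [coeff_add, hnf, hng]; push_cast; ring⟩
  one_mem' μ := by
    rw [coeff_one]
    split_ifs with h
    · exact ⟨1, by simp [← h]⟩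
    · exact ⟨0, by simp⟩
  mul_mem' {f g} hf hg μ := by
    choose nf hnf using hf
    choose ng hng using hg
    refine ⟨∑ x ∈ antidiagonal μ, nf x.1 * ng x.2, ?_⟩
    rw [coeff_mul, Nat.cast_sum, Finset.sum_mul]
    exact Finset.sum_congr rfl fun x hx => coeff_mul_coeff_of_mem_antidiagonal w hnf hng hx

variable {w}

theorem C_mul_X_mem_natScaled (e : τ) : C (w e) * X e ∈ natScaled w := by
  intro μ
  rw [C_mul_X_eq_monomial, coeff_monomial]
  split_ifs with h
  · exact ⟨1, by simp [← h]⟩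
  · exact ⟨0, by simp⟩

theorem X_mem_natScaled {e : τ} (he : w e = 1) : X e ∈ natScaled w := by
  simpa [he] using C_mul_X_mem_natScaled (w := w) e

end NatScaled

section TropicalizationOfNatScaled

variable {K : Type} [Field K] {V : Val K} {τ : Type} {w : τ → K}

theorem tropMv_mul_of_mem_natScaled (hv : ∀ n : ℕ, n ≠ 0 → V.v (n : K) = 0)
    {f g : MvPolynomial τ K} (hf : f ∈ natScaled w) (hg : g ∈ natScaled w) :
    tropMv V.v (f * g) = tropMv V.v f * tropMv V.v g := by
  choose nf hnf using hf
  choose ng hng using hg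
  ext μ
  have hterm x (hx : x ∈ antidiagonal μ) := coeff_mul_coeff_of_mem_antidiagonal w hnf hng hx
  calc (tropMv V.v (f * g)).coeff μ
      = Tropical.trop (V.v (∑ x ∈ antidiagonal μ,
          ((nf x.1 * ng x.2 : ℕ) : K) * μ.prod fun e k => w e ^ k)) := by
        rw [coeff_tropMv, coeff_mul, Finset.sum_congr rfl hterm]
    _ = ∑ x ∈ antidiagonal μ, Tropical.trop (V.v (f.coeff x.1 * g.coeff x.2)) := by
        rw [Val.v_sum_natCast_mul hv, Finset.trop_inf]
        exact Finset.sum_congr rfl fun x hx => by rw [hterm x hx]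
    _ = (tropMv V.v f * tropMv V.v g).coeff μ := by
        simp only [coeff_mul, coeff_tropMv, V.v_mul, Tropical.trop_add]

variable (V w) in
def tropMvHom (hv : ∀ n : ℕ, n ≠ 0 → V.v (n : K) = 0) : natScaled w →* MvPolynomial τ TR where
  toFun f := tropMv V.v f
  map_one' := tropMv_one V
  map_mul' f g := tropMv_mul_of_mem_natScaled hv f.2 g.2

theorem tropMv_aeval_monomial (hv : ∀ n : ℕ, n ≠ 0 → V.v (n : K) = 0) {σ : Type}
    {φ : σ → MvPolynomial τ K} (hφ : ∀ s, φ s ∈ natScaled w) (m : σ →₀ ℕ) (c : K) :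
    tropMv V.v (aeval φ (monomial m c)) =
      aeval (fun s => tropMv V.v (φ s)) (monomial m (Tropical.trop (V.v c))) := by
  let ψ : σ → natScaled w := fun s => ⟨φ s, hφ s⟩
  rw [aeval_monomial, aeval_monomial, algebraMap_eq, algebraMap_eq, tropMv_C_mul]
  congr 1
  have hcoe : ((m.prod fun s k => ψ s ^ k : natScaled w) : MvPolynomial τ K) =
      m.prod fun s k => φ s ^ k :=
    map_finsuppProd (natScaled w).subtype m fun s k => ψ s ^ k
  rw [← hcoe]
  exact (map_finsuppProd (tropMvHom V w hv) m _).trans (by simp only [map_pow]; rfl)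

theorem tropMv_aeval_of_pairwise_disjoint (hv : ∀ n : ℕ, n ≠ 0 → V.v (n : K) = 0) {σ : Type}
    {φ : σ → MvPolynomial τ K} (hφ : ∀ s, φ s ∈ natScaled w) (P : MvPolynomial σ K)
    (hP : ∀ m₁ ∈ P.support, ∀ m₂ ∈ P.support, m₁ ≠ m₂ →
      Disjoint (aeval φ (monomial m₁ (P.coeff m₁))).support
        (aeval φ (monomial m₂ (P.coeff m₂))).support) :
    tropMv V.v (aeval φ P) = aeval (fun s => tropMv V.v (φ s)) (tropMv V.v P) := by
  conv_lhs => rw [P.as_sum, map_sum, tropMv_sum_of_pairwise_disjoint V _ _ hP]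
  rw [tropMv, map_sum]
  exact Finset.sum_congr rfl fun m _ => tropMv_aeval_monomial hv hφ m _

end TropicalizationOfNatScaled

section Substitution

variable {K : Type} [Field K] (SF SG : ℕ → Finset ℕ) (tcF tcG : ℕ × ℕ → K)

def substTag : ((ℕ × ℕ) ⊕ (ℕ × ℕ)) ⊕ Unit → (ℕ ⊕ ℕ) →₀ ℕ :=
  Sum.elim (Sum.elim (fun p => Finsupp.single (Sum.inl p.1) 1)
    fun p => Finsupp.single (Sum.inr p.1) 1) 0

theorem isWeightedHomogeneous_subsAlg (s : ℕ ⊕ ℕ) :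
    (subsAlg SF SG tcF tcG s).IsWeightedHomogeneous substTag (Finsupp.single s 1) := by
  have hterm (c : K) (e) (k : ℕ) (he : substTag e = Finsupp.single s 1) :
      (C c * X e * X (Sum.inr ()) ^ k).IsWeightedHomogeneous substTag (Finsupp.single s 1) := by
    have := ((isWeightedHomogeneous_X K substTag e).C_mul c).mul
      ((isWeightedHomogeneous_X K substTag (Sum.inr ())).pow k)
    rwa [he, show substTag (Sum.inr ()) = 0 from rfl, smul_zero, add_zero] at this
  cases s with
  | inl i => exact IsWeightedHomogeneous.sum _ _ _ fun k _ => hterm _ _ _ rfl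
  | inr j => exact IsWeightedHomogeneous.sum _ _ _ fun q _ => hterm _ _ _ rfl

theorem disjoint_support_aeval_subsAlg_monomial {m₁ m₂ : (ℕ ⊕ ℕ) →₀ ℕ} (h : m₁ ≠ m₂)
    (c₁ c₂ : K) :
    Disjoint (aeval (subsAlg SF SG tcF tcG) (monomial m₁ c₁)).support
      (aeval (subsAlg SF SG tcF tcG) (monomial m₂ c₂)).support := by
  refine disjoint_support_aeval_monomial (isWeightedHomogeneous_subsAlg SF SG tcF tcG) ?_ c₁ c₂
  simpa [Finsupp.weight_apply, Finsupp.smul_single_one, Finsupp.sum_single] using h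

theorem subsAlg_mem_natScaled (s : ℕ ⊕ ℕ) :
    subsAlg SF SG tcF tcG s ∈ natScaled (Sum.elim (Sum.elim tcF tcG) 1) := by
  cases s with
  | inl i => exact sum_mem fun k _ =>
      mul_mem (C_mul_X_mem_natScaled _) (pow_mem (X_mem_natScaled (e := Sum.inr ()) rfl) _)
  | inr j => exact sum_mem fun q _ =>
      mul_mem (C_mul_X_mem_natScaled _) (pow_mem (X_mem_natScaled (e := Sum.inr ()) rfl) _)

end Substitution

theorem no_cancellation_and_trop_of_composition_general
    {K : Type} [Field K] (V : Val K)
    (P : MvPolynomial (ℕ ⊕ ℕ) K)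
    (SF SG : ℕ → Finset ℕ) (tcF tcG : ℕ × ℕ → K) :
    (∀ m₁ ∈ P.support, ∀ m₂ ∈ P.support, m₁ ≠ m₂ →
      Disjoint
        ((MvPolynomial.aeval (subsAlg SF SG tcF tcG)
          (MvPolynomial.monomial m₁ (1 : K))).support)
        ((MvPolynomial.aeval (subsAlg SF SG tcF tcG)
          (MvPolynomial.monomial m₂ (1 : K))).support)) ∧
    -- if the residue field has characteristic zero, tropicalization commutes with
    -- the substitution
    ((∀ n : ℕ, n ≠ 0 → V.v (n : K) = 0) →
      tropMv V.v (MvPolynomial.aeval (subsAlg SF SG tcF tcG) P) =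
        MvPolynomial.aeval (fun s => tropMv V.v (subsAlg SF SG tcF tcG s))
          (tropMv V.v P)) :=
  ⟨fun _ _ _ _ h => disjoint_support_aeval_subsAlg_monomial SF SG tcF tcG h 1 1,
    fun hv => tropMv_aeval_of_pairwise_disjoint hv (subsAlg_mem_natScaled SF SG tcF tcG) P
      fun _ _ _ _ h => disjoint_support_aeval_subsAlg_monomial SF SG tcF tcG h _ _⟩

/-- **no cancellation of terms in the substitution, and compatibility of
tropicalization with composition.**
Let `P(a_i, b_j)` be a polynomial over `𝕂`, homogeneous in the variables `(a_i)_{i∈I}` and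
homogeneous in the variables `(b_j)_{j∈J}` (for instance a resultant `R(I,J,𝕂)`).
Substitute each `a_i` by `f̃_i = Σ_k A_{ik} t^{−ν_{ik}} y^k` and each `b_j` by
`g̃_j = Σ_q B_{jq} t^{−η_{jq}} y^q`, the `A_{ik}`, `B_{jq}` being independent indeterminates.
Then:
* no cancellation of terms occurs: two distinct monomials of `P` give rise, after
  substitution and expansion, to disjoint sets of monomials in the variables
  `A_{ik}`, `B_{jq}`, `y`;
* consequently, when the residue field has characteristic zero (i.e. nonzero integers have
  valuation `0`), the tropicalization of `P(f̃_i, g̃_j)` equals the evaluation of the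
  tropicalization of `P` at the tropicalizations of the `f̃_i`, `g̃_j`. -/
theorem no_cancellation_and_trop_of_composition
    {K : Type} [Field K] (V : Val K)
    (I J : Finset ℕ) (P : MvPolynomial (ℕ ⊕ ℕ) K)
    (hvars : ∀ m ∈ P.support, ∀ s, m s ≠ 0 →
      (∃ i ∈ I, s = Sum.inl i) ∨ (∃ j ∈ J, s = Sum.inr j))
    -- `P` is homogeneous in the `a`-variables and in the `b`-variables
    (da db : ℕ)
    (hhomA : ∀ m ∈ P.support, (∑ i ∈ I, m (Sum.inl i)) = da)
    (hhomB : ∀ m ∈ P.support, (∑ j ∈ J, m (Sum.inr j)) = db)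
    (SF SG : ℕ → Finset ℕ) (tcF tcG : ℕ × ℕ → K)
    (htcF : ∀ p, tcF p ≠ 0) (htcG : ∀ p, tcG p ≠ 0) :
    (∀ m₁ ∈ P.support, ∀ m₂ ∈ P.support, m₁ ≠ m₂ →
      Disjoint
        ((MvPolynomial.aeval (subsAlg SF SG tcF tcG)
          (MvPolynomial.monomial m₁ (1 : K))).support)
        ((MvPolynomial.aeval (subsAlg SF SG tcF tcG)
          (MvPolynomial.monomial m₂ (1 : K))).support)) ∧
    -- if the residue field has characteristic zero, tropicalization commutes with
    -- the substitution
    ((∀ n : ℕ, n ≠ 0 → V.v (n : K) = 0) →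
      tropMv V.v (MvPolynomial.aeval (subsAlg SF SG tcF tcG) P) =
        MvPolynomial.aeval (fun s => tropMv V.v (subsAlg SF SG tcF tcG s))
          (tropMv V.v P)) :=
  no_cancellation_and_trop_of_composition_general V P SF SG tcF tcG
end
end
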